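/- arXiv:1805.06699 — 7 statements merged into one kernel-verified Lean document; each statement's English description precedes it below -/
import Mathlib

section
/- Let M̄ be a maximum antimatching of a finite simple graph G, let {x,y} be a pair of M̄, and let u and v be two distinct vertices of G not covered by M̄ such that N(u) ∩ {x,y} = N(v) ∩ {x,y}. Then N(u) ∩ {x,y} is nonempty, i.e., u (and hence also v) is adjacent to x or to y. -/
open Finset

/-- A finset of vertices is independent (stable) in `G`. -/
def IndepSet {V : Type*} (G : SimpleGraph V) (S : Finset V) : Prop :=
  ∀ u ∈ S, ∀ v ∈ S, ¬ G.Adj u v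

/-- A proper coloring of the subgraph of `G` induced by `A`:
a partition of `A` into independent sets (the color classes). -/
def IsProperColoring {V : Type*} [DecidableEq V] (G : SimpleGraph V) {A : Finset V}
    (P : Finpartition A) : Prop :=
  ∀ S ∈ P.parts, IndepSet G S

/-- The weight of a coloring: the sum over color classes of the maximum weight in the class. -/
def colWeight {V : Type*} [DecidableEq V] {A : Finset V} (w : V → ℕ) (P : Finpartition A) : ℕ :=
  ∑ S ∈ P.parts, S.sup w

/-- The weighted chromatic number of the subgraph of `G` induced by the vertex set `A`. -/
noncomputable def sigmaOn {V : Type*} [DecidableEq V] (G : SimpleGraph V) (w : V → ℕ)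
    (A : Finset V) : ℕ :=
  sInf { n | ∃ P : Finpartition A, IsProperColoring G P ∧ n = colWeight w P }

/-- The weighted chromatic number `σ(G,w)`. -/
noncomputable def sigmaW {V : Type*} [Fintype V] [DecidableEq V] (G : SimpleGraph V)
    (w : V → ℕ) : ℕ :=
  sigmaOn G w Finset.univ

/-- An antimatching of `G`: a set of pairwise disjoint unordered pairs of distinct
non-adjacent vertices of `G` (equivalently, a matching of the complement of `G`). -/
def IsAntimatching {V : Type*} (G : SimpleGraph V) (M : Finset (Sym2 V)) : Prop :=
  (∀ e ∈ M, e ∈ Gᶜ.edgeSet) ∧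
  ∀ e ∈ M, ∀ f ∈ M, e ≠ f → ∀ x, x ∈ e → x ∉ f

/-- A maximum antimatching of `G`. -/
def IsMaxAntimatching {V : Type*} (G : SimpleGraph V) (M : Finset (Sym2 V)) : Prop :=
  IsAntimatching G M ∧ ∀ M' : Finset (Sym2 V), IsAntimatching G M' → M'.card ≤ M.card

/-- The set `V(M̄)` of vertices covered by the pairs of `M`. -/
def coveredVerts {V : Type*} [Fintype V] [DecidableEq V] (M : Finset (Sym2 V)) : Finset V :=
  Finset.univ.filter fun v => ∃ e ∈ M, v ∈ e

/-- `G` is an interval graph: vertices can be assigned nonempty closed real intervals so that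
two distinct vertices are adjacent iff their intervals intersect. -/
def IsIntervalGraph {V : Type*} (G : SimpleGraph V) : Prop :=
  ∃ f : V → ℝ × ℝ, (∀ v, (f v).1 ≤ (f v).2) ∧
    ∀ u v : V, G.Adj u v ↔
      u ≠ v ∧ (Set.Icc (f u).1 (f u).2 ∩ Set.Icc (f v).1 (f v).2).Nonempty

/-- if `{x,y}` is a pair of a maximum antimatching and `u ≠ v` are uncovered
vertices with the same neighborhood inside `{x,y}`, then `u` is adjacent to `x` or `y`. -/
theorem uncovered_class_meets_pair
    {V : Type*} (G : SimpleGraph V)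
    (M : Finset (Sym2 V)) (hM : IsMaxAntimatching G M)
    (x y : V) (hxy : s(x, y) ∈ M)
    (u v : V) (huv : u ≠ v)
    (hu : ∀ e ∈ M, u ∉ e) (hv : ∀ e ∈ M, v ∉ e)
    (hNx : G.Adj u x ↔ G.Adj v x) (hNy : G.Adj u y ↔ G.Adj v y) :
    G.Adj u x ∨ G.Adj u y := by
  classical
  by_contra hcon
  push_neg at hcon
  obtain ⟨hux, huy⟩ := hcon
  have hvx : ¬ G.Adj v x := fun h => hux (hNx.mpr h)
  have hvy : ¬ G.Adj v y := fun h => huy (hNy.mpr h)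
  obtain ⟨hA, hmax⟩ := hM
  have hunex : u ≠ x := fun h => hu _ hxy (by simp [h])
  have huney : u ≠ y := fun h => hu _ hxy (by simp [h])
  have hvnex : v ≠ x := fun h => hv _ hxy (by simp [h])
  have hvney : v ≠ y := fun h => hv _ hxy (by simp [h])
  -- x and y only lie in s(x,y)
  have hxonly : ∀ e ∈ M, e ≠ s(x,y) → x ∉ e ∧ y ∉ e := by
    intro e he hne
    exact ⟨hA.2 _ hxy _ he (Ne.symm hne) x (by simp),
           hA.2 _ hxy _ he (Ne.symm hne) y (by simp)⟩
  set M' : Finset (Sym2 V) := insert s(u,x) (insert s(v,y) (M.erase s(x,y))) with hM'def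
  have hxney : x ≠ y := ((Gᶜ.mem_edgeSet).mp (hA.1 _ hxy)).ne
  have hne1 : s(u,x) ≠ s(v,y) := by
    intro h
    rcases Sym2.eq_iff.mp h with ⟨h1, _⟩ | ⟨h1, _⟩
    exacts [huv h1, huney h1]
  have huxnotM : s(u,x) ∉ M := fun h => hu _ h (by simp)
  have hvynotM : s(v,y) ∉ M := fun h => hv _ h (by simp)
  have hnotin1 : s(u,x) ∉ insert s(v,y) (M.erase s(x,y)) := by
    simp only [Finset.mem_insert, Finset.mem_erase, not_or]
    exact ⟨hne1, fun h => huxnotM h.2⟩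
  have hnotin2 : s(v,y) ∉ M.erase s(x,y) := fun h => hvynotM (Finset.mem_of_mem_erase h)
  have hcard : M'.card = M.card + 1 := by
    rw [hM'def, Finset.card_insert_of_notMem hnotin1,
      Finset.card_insert_of_notMem hnotin2, Finset.card_erase_of_mem hxy]
    have : 1 ≤ M.card := Finset.card_pos.mpr ⟨_, hxy⟩
    omega
  have hedge : ∀ e ∈ M', e ∈ Gᶜ.edgeSet := by
    intro e he
    rw [hM'def] at he
    simp only [Finset.mem_insert, Finset.mem_erase] at he
    rcases he with rfl | rfl | ⟨_, he⟩
    · exact (Gᶜ.mem_edgeSet).mpr ⟨hunex, hux⟩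
    · exact (Gᶜ.mem_edgeSet).mpr ⟨hvney, hvy⟩
    · exact hA.1 _ he
  -- membership helper
  have hmem : ∀ e ∈ M', ∀ z, z ∈ e →
      (e = s(u,x) ∧ (z = u ∨ z = x)) ∨ (e = s(v,y) ∧ (z = v ∨ z = y)) ∨
      (e ∈ M ∧ e ≠ s(x,y) ∧ z ≠ u ∧ z ≠ v ∧ z ≠ x ∧ z ≠ y) := by
    intro e he z hz
    rw [hM'def] at he
    simp only [Finset.mem_insert, Finset.mem_erase] at he
    rcases he with rfl | rfl | ⟨hne, he⟩
    · left; exact ⟨rfl, by simpa using hz⟩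
    · right; left; exact ⟨rfl, by simpa using hz⟩
    · right; right
      refine ⟨he, hne, ?_, ?_, ?_, ?_⟩
      · rintro rfl; exact hu _ he hz
      · rintro rfl; exact hv _ he hz
      · rintro rfl; exact (hxonly _ he hne).1 hz
      · rintro rfl; exact (hxonly _ he hne).2 hz
  have hdisj : ∀ e ∈ M', ∀ f ∈ M', e ≠ f → ∀ z, z ∈ e → z ∉ f := by
    intro e he f hf hef z hze hzf
    rcases hmem e he z hze with ⟨rfl, hz1⟩ | ⟨rfl, hz1⟩ | ⟨heM, hene, hz1, hz2, hz3, hz4⟩ <;>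
    rcases hmem f hf z hzf with ⟨rfl, hz1'⟩ | ⟨rfl, hz1'⟩ | ⟨hfM, hfne, hz1', hz2', hz3', hz4'⟩
    · exact hef rfl
    · rcases hz1 with rfl | rfl <;> rcases hz1' with h | h
      · exact huv h
      · exact huney h
      · exact hvnex h.symm
      · exact hxney h
    · rcases hz1 with rfl | rfl
      · exact hz1' rfl
      · exact hz3' rfl
    · rcases hz1 with rfl | rfl <;> rcases hz1' with h | h
      · exact huv h.symm
      · exact hvnex h
      · exact huney h.symm
      · exact hxney h.symm
    · exact hef rfl
    · rcases hz1 with rfl | rfl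
      · exact hz2' rfl
      · exact hz4' rfl
    · rcases hz1' with rfl | rfl
      · exact hz1 rfl
      · exact hz3 rfl
    · rcases hz1' with rfl | rfl
      · exact hz2 rfl
      · exact hz4 rfl
    · exact hA.2 _ heM _ hfM hef z hze hzf
  have := hmax M' ⟨hedge, hdisj⟩
  omega
end

section
/- Let G be a finite simple graph with positive integer vertex weights w, let c be a proper coloring of G, and let u and v be closed twins of G with w(v) ≥ w(u). Suppose that in c the singleton {v} is a color class and u belongs to a color class S (with u ∈ S, v ∉ S). Then the coloring obtained from c by replacing the color classes S and {v} with (S ∖ {u}) ∪ {v} and {u} is a proper coloring of G whose weight is at most the weight of c. -/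
open Finset

/-!
Because `u` and `v` are closed twins, `v` has no neighbour in `S \ {u}`, so `v` can take the
place of `u` in `S` while `u` becomes a class of its own. The two classes then weigh
`w u + max (S \ {u} ∪ {v})` instead of `max S + w v`, and since `w u ≤ min (max S) (w v)` and
`max (S \ {u} ∪ {v}) ≤ max (max S) (w v)`, the total weight does not increase.
-/

namespace Finpartition

variable {α : Type*} [GeneralizedBooleanAlgebra α] [DecidableEq α] {a b b₁ b₂ c₁ c₂ : α}

def erasePart (P : Finpartition a) (hb : b ∈ P.parts) : Finpartition (a \ b) :=
  P.ofSubset (erase_subset b P.parts) <| by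
    have hdisj : Disjoint b ((P.parts.erase b).sup id) :=
      P.supIndep (erase_subset b P.parts) hb (notMem_erase b P.parts)
    calc (P.parts.erase b).sup id
        = (b ⊔ (P.parts.erase b).sup id) \ b := hdisj.sup_sdiff_cancel_left.symm
      _ = a \ b := by
        congr 1
        exact (sup_insert (f := id)).symm.trans (by rw [insert_erase hb, P.sup_parts])

def replacePair (P : Finpartition a) (hb₁ : b₁ ∈ P.parts) (hb₂ : b₂ ∈ P.parts) (hb : b₁ ≠ b₂)
    (hc₁ : c₁ ≠ ⊥) (hc₂ : c₂ ≠ ⊥) (hc : Disjoint c₁ c₂) (hsup : c₁ ⊔ c₂ = b₁ ⊔ b₂) :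
    Finpartition a :=
  have hrest : (a \ b₁) \ b₂ = a \ (c₁ ⊔ c₂) := by rw [sdiff_sdiff_left, hsup]
  ((P.erasePart hb₁).erasePart (mem_erase.2 ⟨hb.symm, hb₂⟩)).extend hc₂
      (hrest ▸ disjoint_sdiff_self_left.mono_right le_sup_right) rfl
    |>.extend hc₁
      (disjoint_sup_left.2 ⟨hrest ▸ disjoint_sdiff_self_left.mono_right le_sup_left, hc.symm⟩)
      (by
        rw [hrest, sup_assoc, sup_comm c₂,
          sdiff_sup_cancel (hsup ▸ sup_le (P.le hb₁) (P.le hb₂))])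

theorem notMem_erase_erase_of_le_sup (P : Finpartition a) (hb₁ : b₁ ∈ P.parts)
    (hb₂ : b₂ ∈ P.parts) {c : α} (hc : c ≠ ⊥) (hle : c ≤ b₁ ⊔ b₂) :
    c ∉ (P.parts.erase b₁).erase b₂ := by
  intro hmem
  obtain ⟨hcb₂, hcb₁, hcP⟩ : c ≠ b₂ ∧ c ≠ b₁ ∧ c ∈ P.parts := by simpa using hmem
  have : Disjoint c (b₁ ⊔ b₂) :=
    disjoint_sup_right.2 ⟨P.disjoint hcP hb₁ hcb₁, P.disjoint hcP hb₂ hcb₂⟩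
  exact hc (this.eq_bot_of_le hle)

variable (P : Finpartition a) (hb₁ : b₁ ∈ P.parts) (hb₂ : b₂ ∈ P.parts) (hb : b₁ ≠ b₂)
    (hc₁ : c₁ ≠ ⊥) (hc₂ : c₂ ≠ ⊥) (hc : Disjoint c₁ c₂) (hsup : c₁ ⊔ c₂ = b₁ ⊔ b₂)

theorem parts_replacePair : (P.replacePair hb₁ hb₂ hb hc₁ hc₂ hc hsup).parts =
    insert c₁ (insert c₂ ((P.parts.erase b₁).erase b₂)) :=
  rfl

theorem sum_replacePair_add {M : Type*} [AddCommMonoid M] (f : α → M) :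
    ∑ p ∈ (P.replacePair hb₁ hb₂ hb hc₁ hc₂ hc hsup).parts, f p + (f b₁ + f b₂) =
      ∑ p ∈ P.parts, f p + (f c₁ + f c₂) := by
  have hc₂R := P.notMem_erase_erase_of_le_sup hb₁ hb₂ hc₂ (hsup ▸ le_sup_right)
  have hc₁R : c₁ ∉ insert c₂ ((P.parts.erase b₁).erase b₂) :=
    mem_insert.not.2 <| not_or.2
      ⟨Disjoint.ne hc₁ hc, P.notMem_erase_erase_of_le_sup hb₁ hb₂ hc₁ (hsup ▸ le_sup_left)⟩
  rw [parts_replacePair, sum_insert hc₁R, sum_insert hc₂R, ← add_sum_erase _ _ hb₁,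
    ← add_sum_erase _ _ (mem_erase.2 ⟨hb.symm, hb₂⟩)]
  abel

end Finpartition

theorem IsProperColoring.replacePair {V : Type*} [DecidableEq V] {G : SimpleGraph V}
    {A b₁ b₂ c₁ c₂ : Finset V} {P : Finpartition A} (hP : IsProperColoring G P)
    (hb₁ : b₁ ∈ P.parts) (hb₂ : b₂ ∈ P.parts) (hb : b₁ ≠ b₂) (hc₁ : c₁ ≠ ⊥) (hc₂ : c₂ ≠ ⊥)
    (hc : Disjoint c₁ c₂) (hsup : c₁ ⊔ c₂ = b₁ ⊔ b₂) (h₁ : IndepSet G c₁) (h₂ : IndepSet G c₂) :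
    IsProperColoring G (P.replacePair hb₁ hb₂ hb hc₁ hc₂ hc hsup) := by
  intro p hp
  rw [Finpartition.parts_replacePair, mem_insert, mem_insert] at hp
  rcases hp with rfl | rfl | hp
  exacts [h₁, h₂, hP p (mem_of_mem_erase (mem_of_mem_erase hp))]

theorem indepSet_singleton {V : Type*} (G : SimpleGraph V) (u : V) : IndepSet G {u} := by
  intro x hx y hy
  rw [mem_singleton.1 hx, mem_singleton.1 hy]
  exact G.irrefl

section ClosedTwins

variable {V : Type*} [DecidableEq V]

theorem IndepSet.sdiff_union_of_closedTwins {G : SimpleGraph V} {S : Finset V} {u v : V}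
    (hS : IndepSet G S) (htwin : ∀ x, (x = u ∨ G.Adj u x) ↔ (x = v ∨ G.Adj v x)) (huS : u ∈ S) :
    IndepSet G (S \ {u} ∪ {v}) := by
  have hv : ∀ x ∈ S \ {u}, ¬ G.Adj v x := by
    intro x hx hvx
    obtain ⟨hxS, hxu⟩ : x ∈ S ∧ x ≠ u := by simpa using hx
    exact ((htwin x).2 (Or.inr hvx)).elim hxu (hS u huS x hxS)
  intro x hx y hy
  rw [mem_union, mem_singleton] at hx hy
  rcases hx with hx | rfl <;> rcases hy with hy | rfl
  · exact hS x (mem_sdiff.1 hx).1 y (mem_sdiff.1 hy).1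
  · exact fun h => hv x hx h.symm
  · exact hv y hy
  · exact G.irrefl

theorem sup_singleton_add_sup_sdiff_union_le {M : Type*} [LinearOrder M] [AddCommMonoid M]
    [IsOrderedAddMonoid M] [OrderBot M] (w : V → M) {S : Finset V} {u v : V} (huS : u ∈ S)
    (hwuv : w u ≤ w v) : w u + (S \ {u} ∪ {v}).sup w ≤ S.sup w + w v :=
  calc w u + (S \ {u} ∪ {v}).sup w ≤ min (S.sup w) (w v) + max (S.sup w) (w v) := by
        rw [sup_union, sup_singleton]
        exact add_le_add (le_min (le_sup huS) hwuv) (sup_le_sup_right (sup_mono sdiff_subset) _)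
    _ = S.sup w + w v := min_add_max _ _

end ClosedTwins

theorem swap_closed_twins_coloring_general
    {V : Type*} [Fintype V] [DecidableEq V] (G : SimpleGraph V) (w : V → ℕ)
    (c : Finpartition (Finset.univ : Finset V)) (hc : IsProperColoring G c)
    (u v : V)
    (htwin : ∀ x : V, (x = u ∨ G.Adj u x) ↔ (x = v ∨ G.Adj v x))
    (hwuv : w u ≤ w v)
    (S : Finset V) (hS : S ∈ c.parts) (huS : u ∈ S) (hvS : v ∉ S)
    (hvsing : {v} ∈ c.parts) :
    ∃ c' : Finpartition (Finset.univ : Finset V),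
      c'.parts = insert {u} (insert ((S \ {u}) ∪ {v}) ((c.parts.erase S).erase {v})) ∧
      IsProperColoring G c' ∧ colWeight w c' ≤ colWeight w c := by
  have hSv : S ≠ {v} := fun h => hvS (h ▸ mem_singleton_self v)
  have hu : ({u} : Finset V) ≠ ⊥ := singleton_ne_empty u
  have hS' : S \ {u} ∪ {v} ≠ ⊥ := ne_empty_of_mem (mem_union_right _ (mem_singleton_self v))
  have hdisj : Disjoint {u} (S \ {u} ∪ {v}) :=
    disjoint_singleton_left.2 (by simpa using fun h : u = v => hvS (h ▸ huS))
  have hunion : {u} ⊔ (S \ {u} ∪ {v}) = S ⊔ {v} := by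
    rw [sup_eq_union, ← union_assoc, union_sdiff_of_subset (singleton_subset_iff.2 huS)]
    rfl
  refine ⟨c.replacePair hS hvsing hSv hu hS' hdisj hunion, rfl,
    hc.replacePair hS hvsing hSv hu hS' hdisj hunion (indepSet_singleton G u)
      ((hc S hS).sdiff_union_of_closedTwins htwin huS), ?_⟩
  have hsum := c.sum_replacePair_add hS hvsing hSv hu hS' hdisj hunion (·.sup w)
  have hle := sup_singleton_add_sup_sdiff_union_le w huS hwuv
  simp only [sup_singleton] at hsum
  unfold colWeight
  omega

/-- swapping closed twins `u` (in class `S`) and `v` (a singleton class, with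
`w v ≥ w u`) yields a proper coloring of weight at most the weight of `c`. -/
theorem swap_closed_twins_coloring
    {V : Type*} [Fintype V] [DecidableEq V] (G : SimpleGraph V) (w : V → ℕ)
    (hw : ∀ x, 0 < w x)
    (c : Finpartition (Finset.univ : Finset V)) (hc : IsProperColoring G c)
    (u v : V)
    (htwin : ∀ x : V, (x = u ∨ G.Adj u x) ↔ (x = v ∨ G.Adj v x))
    (hwuv : w u ≤ w v)
    (S : Finset V) (hS : S ∈ c.parts) (huS : u ∈ S) (hvS : v ∉ S)
    (hvsing : {v} ∈ c.parts) :
    ∃ c' : Finpartition (Finset.univ : Finset V),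
      c'.parts = insert {u} (insert ((S \ {u}) ∪ {v}) ((c.parts.erase S).erase {v})) ∧
      IsProperColoring G c' ∧ colWeight w c' ≤ colWeight w c :=
  swap_closed_twins_coloring_general G w c hc u v htwin hwuv S hS huS hvS hvsing
end

section
/- Let G be a finite simple graph with positive integer vertex weights w, let M̄ be a maximum antimatching of G with |M̄| ≥ 1, and let K = V(G) ∖ V(M̄). Let C ⊆ K be an equivalence class of the relation on K identifying vertices with the same neighborhood inside V(M̄), and suppose |C| > |M̄|. Let W ⊆ C with |W| = |M̄| be such that w(u) ≥ w(v) for every u ∈ W and every v ∈ C ∖ W. Then σ(G,w) = σ(G − (C ∖ W), w) + Σ_{v ∈ C∖W} w(v), where G − (C∖W) is the graph obtained from G by deleting all vertices of C ∖ W. -/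
open Finset

/-!
The uncovered vertices of a maximum antimatching form a clique (an uncovered non-adjacent pair
could be added to it), so the vertices of `C` are pairwise adjacent twins whose non-neighbours
are exactly the set `X` of covered vertices not adjacent to `u0`. A pair of the antimatching
contains at most one vertex of `X`: otherwise pairing its two vertices with two vertices of `C`
would give a larger antimatching. Hence `|X| ≤ |M̄| = |W|`.

The vertices of `C ∖ W` are removed one at a time. For such a vertex `c`, take an optimal
colouring. The classes of the vertices of `W ∪ {c}` are distinct and their other members lie in
`X`, so by pigeonhole some `c'` among them is alone in its class. Swapping the twins `c` and
`c'` is an automorphism of `G` and, as `w c ≤ w c'`, does not increase the weight; afterwards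
`c` is alone, and dropping its class saves exactly `w c`.
-/

section Antimatching

variable {V : Type*} {G : SimpleGraph V} {M : Finset (Sym2 V)}

theorem IsAntimatching.subset {N : Finset (Sym2 V)} (hM : IsAntimatching G M) (hNM : N ⊆ M) :
    IsAntimatching G N :=
  ⟨fun e he => hM.1 e (hNM he), fun e he f hf => hM.2 e (hNM he) f (hNM hf)⟩

variable [DecidableEq V]

theorem IsAntimatching.insert {a b : V} (hM : IsAntimatching G M) (hab : Gᶜ.Adj a b)
    (ha : ∀ e ∈ M, a ∉ e) (hb : ∀ e ∈ M, b ∉ e) :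
    IsAntimatching G (insert s(a, b) M) := by
  have hfresh : ∀ x ∈ s(a, b), ∀ e ∈ M, x ∉ e := by
    simp only [Sym2.mem_iff]
    rintro x (rfl | rfl)
    exacts [ha, hb]
  refine ⟨fun e he => ?_, fun e he f hf hef x hxe hxf => ?_⟩
  · rcases mem_insert.mp he with rfl | he
    exacts [hab, hM.1 e he]
  · rcases mem_insert.mp he with rfl | he <;> rcases mem_insert.mp hf with rfl | hf
    · exact hef rfl
    · exact hfresh x hxe f hf hxf
    · exact hfresh x hxf e he hxe
    · exact hM.2 e he f hf hef x hxe hxf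

theorem IsMaxAntimatching.adj_of_forall_notMem (hM : IsMaxAntimatching G M) {a b : V}
    (hab : a ≠ b) (ha : ∀ e ∈ M, a ∉ e) (hb : ∀ e ∈ M, b ∉ e) : G.Adj a b := by
  by_contra h
  have hnew : s(a, b) ∉ M := fun he => ha _ he (Sym2.mem_mk_left a b)
  have := hM.2 _ (hM.1.insert ⟨hab, h⟩ ha hb)
  rw [card_insert_of_notMem hnew] at this
  omega

variable [Fintype V]

theorem mem_coveredVerts {v : V} : v ∈ coveredVerts M ↔ ∃ e ∈ M, v ∈ e := by
  simp [coveredVerts]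

theorem IsMaxAntimatching.isClique_compl_coveredVerts (hM : IsMaxAntimatching G M) :
    G.IsClique ((coveredVerts M : Set V)ᶜ) := by
  intro a ha b hb hab
  simp only [Set.mem_compl_iff, mem_coe, mem_coveredVerts, not_exists, not_and] at ha hb
  exact hM.adj_of_forall_notMem hab ha hb

theorem IsMaxAntimatching.eq_of_mem_of_not_adj (hM : IsMaxAntimatching G M) {u₀ u₁ : V}
    (hu₀ : u₀ ∉ coveredVerts M) (hu₁ : u₁ ∉ coveredVerts M) (hne : u₀ ≠ u₁)
    (htwin : ∀ x ∈ coveredVerts M, G.Adj u₁ x ↔ G.Adj u₀ x) {e : Sym2 V} (he : e ∈ M)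
    {x y : V} (hx : x ∈ e) (hy : y ∈ e) (hux : ¬G.Adj u₀ x) (huy : ¬G.Adj u₀ y) :
    x = y := by
  by_contra hxy
  have hycov : y ∈ coveredVerts M := mem_coveredVerts.mpr ⟨e, he, hy⟩
  simp only [mem_coveredVerts, not_exists, not_and] at hu₀ hu₁
  have hdisj : ∀ z ∈ e, ∀ f ∈ M.erase e, z ∉ f := fun z hz f hf =>
    hM.1.2 e he f (mem_of_mem_erase hf) (ne_of_mem_erase hf).symm z hz
  have hxu₀ : x ≠ u₀ := fun h => hu₀ e he (h ▸ hx)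
  have hM' : IsAntimatching G (insert s(x, u₀) (M.erase e)) :=
    (hM.1.subset (erase_subset e M)).insert ⟨hxu₀, fun h => hux h.symm⟩ (hdisj x hx)
      fun f hf => hu₀ f (mem_of_mem_erase hf)
  have hcard : #(insert s(x, u₀) (M.erase e)) = #M := by
    rw [card_insert_of_notMem fun h => hu₀ _ (mem_of_mem_erase h) (Sym2.mem_mk_right x u₀),
      card_erase_add_one he]
  -- Trading `e` for `s(x, u₀)` keeps the antimatching maximum, so `y` and `u₁` are adjacent.
  have hM'max : IsMaxAntimatching G (insert s(x, u₀) (M.erase e)) :=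
    ⟨hM', fun N hN => hcard ▸ hM.2 N hN⟩
  refine huy ((htwin y hycov).mp (hM'max.adj_of_forall_notMem ?_ ?_ ?_).symm)
  · exact fun h => hu₁ e he (h ▸ hy)
  · intro f hf
    rcases mem_insert.mp hf with rfl | hf
    · simp only [Sym2.mem_iff, not_or]
      exact ⟨Ne.symm hxy, fun h => hu₀ e he (h ▸ hy)⟩
    · exact hdisj y hy f hf
  · intro f hf
    rcases mem_insert.mp hf with rfl | hf
    · simp only [Sym2.mem_iff, not_or]
      exact ⟨fun h => hu₁ e he (h ▸ hx), hne.symm⟩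
    · exact hu₁ f (mem_of_mem_erase hf)

theorem IsMaxAntimatching.card_filter_not_adj_le [DecidableRel G.Adj]
    (hM : IsMaxAntimatching G M) {u₀ u₁ : V}
    (hu₀ : u₀ ∉ coveredVerts M) (hu₁ : u₁ ∉ coveredVerts M) (hne : u₀ ≠ u₁)
    (htwin : ∀ x ∈ coveredVerts M, G.Adj u₁ x ↔ G.Adj u₀ x) :
    #{x ∈ coveredVerts M | ¬G.Adj u₀ x} ≤ #M :=
  card_le_card_of_forall_subsingleton (· ∈ ·)
    (fun _ hx => mem_coveredVerts.mp (mem_filter.mp hx).1)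
    fun _ he _ hx _ hy => hM.eq_of_mem_of_not_adj hu₀ hu₁ hne htwin he hx.2 hy.2
      (mem_filter.mp hx.1).2 (mem_filter.mp hy.1).2

end Antimatching

theorem IndepSet.mono {V : Type*} {G : SimpleGraph V} {S T : Finset V} (hT : IndepSet G T)
    (hST : S ⊆ T) : IndepSet G S :=
  fun u hu v hv => hT u (hST hu) v (hST hv)

section Coloring

variable {V : Type*} [DecidableEq V] {G : SimpleGraph V} {w : V → ℕ} {A : Finset V}

theorem IsProperColoring.not_adj_of_mem_part {P : Finpartition A} (hP : IsProperColoring G P)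
    {a b : V} (hb : b ∈ P.part a) : ¬G.Adj a b := by
  have ha : a ∈ A := P.part_nonempty.mp ⟨b, hb⟩
  exact hP _ (P.part_mem.mpr ha) a (P.mem_part ha) b hb

theorem sigmaOn_le_colWeight {P : Finpartition A} (hP : IsProperColoring G P) :
    sigmaOn G w A ≤ colWeight w P :=
  Nat.sInf_le ⟨P, hP, rfl⟩

theorem exists_isProperColoring_colWeight_eq (G : SimpleGraph V) (w : V → ℕ) (A : Finset V) :
    ∃ P : Finpartition A, IsProperColoring G P ∧ colWeight w P = sigmaOn G w A := by
  have hbot : IsProperColoring G (⊥ : Finpartition A) := by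
    intro S hS
    obtain ⟨a, -, rfl⟩ := Finpartition.mem_bot_iff.mp hS
    simp [IndepSet]
  obtain ⟨P, hP, hPw⟩ := Nat.sInf_mem (⟨_, ⊥, hbot, rfl⟩ :
    {n | ∃ P : Finpartition A, IsProperColoring G P ∧ n = colWeight w P}.Nonempty)
  exact ⟨P, hP, hPw.symm⟩

theorem sigmaOn_le_sum_sup {ι : Type*} (s : Finset ι) (F : ι → Finset V)
    (hdisj : (s : Set ι).PairwiseDisjoint F) (hindep : ∀ i ∈ s, IndepSet G (F i))
    (hsup : s.sup F = A) : sigmaOn G w A ≤ ∑ i ∈ s, (F i).sup w := by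
  let P : Finpartition A := .ofErase (s.image F)
    (SupIndep.image (supIndep_iff_pairwiseDisjoint.mpr hdisj)) (by rwa [sup_image])
  have hP : IsProperColoring G P := by
    intro S hS
    obtain ⟨i, hi, rfl⟩ := mem_image.mp (mem_of_mem_erase hS)
    exact hindep i hi
  calc sigmaOn G w A ≤ colWeight w P := sigmaOn_le_colWeight hP
    _ ≤ ∑ S ∈ s.image F, S.sup w := sum_le_sum_of_subset (erase_subset _ _)
    _ ≤ ∑ i ∈ s, (F i).sup w := sum_image_le_of_nonneg fun _ _ => Nat.zero_le _

theorem sigmaOn_le_sigmaOn_erase_add {c : V} (hc : c ∈ A) :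
    sigmaOn G w A ≤ sigmaOn G w (A.erase c) + w c := by
  obtain ⟨P, hP, hPw⟩ := exists_isProperColoring_colWeight_eq G w (A.erase c)
  have hcP : ∀ S ∈ P.parts, c ∉ S := fun S hS hcS => by simpa using P.le hS hcS
  have hsingle : {c} ∉ P.parts := fun h => hcP _ h (mem_singleton_self c)
  calc sigmaOn G w A ≤ ∑ S ∈ insert {c} P.parts, S.sup w := by
        refine sigmaOn_le_sum_sup _ id ?_ ?_ ?_
        · rw [coe_insert]
          exact P.disjoint.insert fun S hS _ => disjoint_singleton_left.mpr (hcP S hS)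
        · intro S hS
          rcases mem_insert.mp hS with rfl | hS
          · simp [IndepSet]
          · exact hP S hS
        · rw [sup_insert, P.sup_parts, id, sup_eq_union, ← insert_eq, insert_erase hc]
    _ = sigmaOn G w (A.erase c) + w c := by
        rw [sum_insert hsingle, sup_singleton, ← hPw, colWeight, add_comm]

theorem sigmaOn_erase_add_le_sum_sup {ι : Type*} (s : Finset ι) (F : ι → Finset V)
    (hdisj : (s : Set ι).PairwiseDisjoint F) (hindep : ∀ i ∈ s, IndepSet G (F i))
    (hsup : s.sup F = A) {i₀ : ι} (hi₀ : i₀ ∈ s) {c : V} (hc : F i₀ = {c}) :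
    sigmaOn G w (A.erase c) + w c ≤ ∑ i ∈ s, (F i).sup w := by
  classical
  have hrest : ∀ i ∈ s.erase i₀, (F i).erase c = F i := fun i hi =>
    erase_eq_of_notMem fun hci => disjoint_singleton_left.mp
      (hc ▸ hdisj hi₀ (mem_of_mem_erase hi) (ne_of_mem_erase hi).symm) hci
  calc sigmaOn G w (A.erase c) + w c ≤ ∑ i ∈ s, ((F i).erase c).sup w + w c := by
        gcongr
        refine sigmaOn_le_sum_sup s _ (hdisj.mono_on fun i _ => erase_subset c (F i))
          (fun i hi => (hindep i hi).mono (erase_subset _ _)) ?_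
        simp_rw [erase_eq]
        rw [Finset.sup_sdiff_right, hsup]
    _ = ∑ i ∈ s, (F i).sup w := by
        rw [← add_sum_erase s _ hi₀, ← add_sum_erase s _ hi₀, sum_congr rfl fun i hi => by
          rw [hrest i hi], hc]
        simp [add_comm]

theorem IsProperColoring.exists_part_eq_singleton {P : Finpartition A}
    (hP : IsProperColoring G P) {S X : Finset V} (hSA : S ⊆ A) (hS : G.IsClique (S : Set V))
    (hSX : ∀ u ∈ S, ∀ y, y ≠ u → ¬G.Adj u y → y ∈ X) (hcard : #X < #S) :
    ∃ u ∈ S, P.part u = {u} := by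
  by_contra! h
  have hne : ∀ u ∈ S, ((P.part u).erase u).Nonempty := fun u hu => by
    rw [nonempty_iff_ne_empty, ne_eq, erase_eq_empty_iff, not_or, P.part_eq_empty, not_not]
    exact ⟨hSA hu, h u hu⟩
  have hdisj : (S : Set V).PairwiseDisjoint fun u => (P.part u).erase u := by
    intro u hu v hv huv
    have hpart : P.part u ≠ P.part v := fun heq =>
      hP.not_adj_of_mem_part (heq ▸ P.mem_part (hSA hv)) (hS hu hv huv)
    exact (P.disjoint (P.part_mem.mpr (hSA hu)) (P.part_mem.mpr (hSA hv)) hpart).mono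
      (erase_subset _ _) (erase_subset _ _)
  have hsub : S.biUnion (fun u => (P.part u).erase u) ⊆ X := by
    simp only [biUnion_subset]
    intro u hu y hy
    exact hSX u hu y (ne_of_mem_erase hy) (hP.not_adj_of_mem_part (mem_of_mem_erase hy))
  exact (card_le_card_biUnion hdisj hne).trans (card_le_card hsub) |>.not_gt hcard

section Swap

variable {c c' : V}

theorem adj_swap_iff_of_twin (htwin : ∀ y, y ≠ c → y ≠ c' → (G.Adj c y ↔ G.Adj c' y))
    (a b : V) :
    G.Adj (Equiv.swap c c' a) (Equiv.swap c c' b) ↔ G.Adj a b := by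
  simp only [Equiv.swap_apply_def]
  split_ifs <;> subst_vars <;> grind [G.adj_comm, G.irrefl]

theorem sum_sup_comp_swap_le (P : Finpartition A) (hc : c ∈ A) (hcc' : c ≠ c')
    (hc' : P.part c' = {c'}) (hw : w c ≤ w c') :
    ∑ S ∈ P.parts, S.sup (w ∘ Equiv.swap c c') ≤ ∑ S ∈ P.parts, S.sup w := by
  have hc'A : c' ∈ A := P.mem_part_self.mp (hc' ▸ mem_singleton_self c')
  have hc'P : {c'} ∈ P.parts := hc' ▸ P.part_mem.mpr hc'A
  have hc'c : c' ∉ P.part c := fun h => hcc' <| mem_singleton.mp <| by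
    rw [← hc', P.part_eq_of_mem (P.part_mem.mpr hc) h]
    exact P.mem_part hc
  have hcP : P.part c ∈ P.parts.erase {c'} :=
    mem_erase.mpr ⟨fun h => hc'c (h ▸ mem_singleton_self c'), P.part_mem.mpr hc⟩
  have hfix : ∀ S : Finset V, c ∉ S → c' ∉ S → S.sup (w ∘ Equiv.swap c c') = S.sup w :=
    fun S hcS hc'S => sup_congr rfl fun x hx => by
      rw [Function.comp_apply, Equiv.swap_apply_of_ne_of_ne (ne_of_mem_of_not_mem hx hcS)
        (ne_of_mem_of_not_mem hx hc'S)]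
  have hrest : ∀ S ∈ (P.parts.erase {c'}).erase (P.part c),
      S.sup (w ∘ Equiv.swap c c') = S.sup w := by
    intro S hS
    obtain ⟨hSc, hS'⟩ := mem_erase.mp hS
    obtain ⟨hSc', hS⟩ := mem_erase.mp hS'
    exact hfix S (fun h => hSc (P.part_eq_of_mem hS h).symm)
      (fun h => hSc' (hc' ▸ P.part_eq_of_mem hS h).symm)
  -- Only the classes `{c'}` and `P.part c` change: `w c + max (w c') r ≤ w c' + max (w c) r`.
  have hpc : P.part c = insert c ((P.part c).erase c) := (insert_erase (P.mem_part hc)).symm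
  have hR := hfix _ (notMem_erase c _) fun h => hc'c (mem_of_mem_erase h)
  rw [← add_sum_erase P.parts _ hc'P, ← add_sum_erase P.parts _ hc'P,
    ← add_sum_erase _ _ hcP, ← add_sum_erase _ _ hcP, sum_congr rfl hrest, hpc]
  simp only [sup_singleton, sup_insert, Function.comp_apply, Equiv.swap_apply_left,
    Equiv.swap_apply_right, hR]
  omega

theorem IsProperColoring.sigmaOn_erase_add_le_colWeight_of_twin {P : Finpartition A}
    (hP : IsProperColoring G P) (hc : c ∈ A) (hcc' : c ≠ c') (hc' : P.part c' = {c'})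
    (htwin : ∀ y, y ≠ c → y ≠ c' → (G.Adj c y ↔ G.Adj c' y)) (hw : w c ≤ w c') :
    sigmaOn G w (A.erase c) + w c ≤ colWeight w P := by
  set σ := Equiv.swap c c'
  have hc'A : c' ∈ A := P.mem_part_self.mp (hc' ▸ mem_singleton_self c')
  have hσA : A.map (σ : V ↪ V) = A := map_perm fun x hx => by
    rcases (Equiv.swap_apply_ne_self_iff.mp hx).2 with rfl | rfl
    exacts [hc, hc'A]
  calc sigmaOn G w (A.erase c) + w c ≤ ∑ S ∈ P.parts, (S.map (σ : V ↪ V)).sup w := by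
        refine sigmaOn_erase_add_le_sum_sup P.parts (fun S => S.map (σ : V ↪ V))
          (fun S hS T hT hST => (disjoint_map _).mpr (P.disjoint hS hT hST)) ?_ ?_
          (hc' ▸ P.part_mem.mpr hc'A) (by simp [σ])
        · intro S hS u hu v hv
          obtain ⟨a, ha, rfl⟩ := mem_map.mp hu
          obtain ⟨b, hb, rfl⟩ := mem_map.mp hv
          exact (adj_swap_iff_of_twin htwin a b).not.mpr (hP S hS a ha b hb)
        · have h := apply_sup_eq_sup_comp (s := P.parts) (f := id)
            (fun S : Finset V => S.map (σ : V ↪ V)) (fun _ _ => map_union _ _) (map_empty _)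
          rw [P.sup_parts, hσA] at h
          exact h.symm
    _ ≤ colWeight w P := by
        simp_rw [sup_map]
        exact sum_sup_comp_swap_le P hc hcc' hc' hw

end Swap

theorem sigmaOn_eq_sigmaOn_erase_add {C X T : Finset V} {c : V} (hC : G.IsClique (C : Set V))
    (hX : ∀ u ∈ C, ∀ y, y ≠ u → (¬G.Adj u y ↔ y ∈ X)) (hTC : T ⊆ C) (hTA : T ⊆ A)
    (hcC : c ∈ C) (hcA : c ∈ A) (hcT : c ∉ T) (hXT : #X ≤ #T)
    (hw : ∀ u ∈ T, w c ≤ w u) :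
    sigmaOn G w A = sigmaOn G w (A.erase c) + w c := by
  refine le_antisymm (sigmaOn_le_sigmaOn_erase_add hcA) ?_
  obtain ⟨P, hP, hPw⟩ := exists_isProperColoring_colWeight_eq G w A
  have hcTC : insert c T ⊆ C := insert_subset hcC hTC
  obtain ⟨u, hu, hPu⟩ := hP.exists_part_eq_singleton (insert_subset hcA hTA)
    (hC.subset (coe_subset.mpr hcTC)) (fun u hu y hyu => (hX u (hcTC hu) y hyu).mp)
    (by rw [card_insert_of_notMem hcT]; omega)
  rw [← hPw]
  rcases mem_insert.mp hu with rfl | huT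
  · exact sigmaOn_erase_add_le_sum_sup P.parts id P.disjoint hP P.sup_parts
      (P.part_mem.mpr hcA) hPu
  · refine hP.sigmaOn_erase_add_le_colWeight_of_twin hcA (fun h => hcT (h ▸ huT)) hPu
      (fun y hyc hyu => ?_) (hw u huT)
    rw [← not_iff_not, hX c hcC y hyc, hX u (hTC huT) y hyu]

theorem sigmaOn_eq_sigmaOn_sdiff_add_sum {C X T D : Finset V} (hC : G.IsClique (C : Set V))
    (hX : ∀ u ∈ C, ∀ y, y ≠ u → (¬G.Adj u y ↔ y ∈ X)) (hTC : T ⊆ C) (hTA : T ⊆ A)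
    (hDC : D ⊆ C) (hDA : D ⊆ A) (hDT : Disjoint D T) (hXT : #X ≤ #T)
    (hw : ∀ d ∈ D, ∀ u ∈ T, w d ≤ w u) :
    sigmaOn G w A = sigmaOn G w (A \ D) + ∑ d ∈ D, w d := by
  induction D using Finset.induction_on with
  | empty => simp
  | insert d D hd ih =>
    rw [insert_subset_iff] at hDC hDA
    rw [disjoint_insert_left] at hDT
    rw [ih hDC.2 hDA.2 hDT.2 fun d' hd' => hw d' (mem_insert_of_mem hd'), sum_insert hd,
      sigmaOn_eq_sigmaOn_erase_add hC hX hTC (subset_sdiff.mpr ⟨hTA, hDT.2.symm⟩) hDC.1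
        (mem_sdiff.mpr ⟨hDA.1, hd⟩) hDT.1 hXT (hw d (mem_insert_self d D)), sdiff_insert]
    ring

end Coloring

theorem rule2_safe_general
    {V : Type*} [Fintype V] [DecidableEq V] (G : SimpleGraph V) (w : V → ℕ)
    (M : Finset (Sym2 V)) (hM : IsMaxAntimatching G M) (hM1 : 1 ≤ M.card)
    (K : Finset V) (hK : K = Finset.univ \ coveredVerts M)
    (C : Finset V) (u0 : V) (hu0 : u0 ∈ K)
    (hC : ∀ v : V, v ∈ C ↔ v ∈ K ∧ ∀ x ∈ coveredVerts M, (G.Adj v x ↔ G.Adj u0 x))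
    (hCbig : M.card < C.card)
    (W : Finset V) (hWC : W ⊆ C) (hWcard : W.card = M.card)
    (hWheavy : ∀ u ∈ W, ∀ v ∈ C \ W, w v ≤ w u) :
    sigmaW G w = sigmaOn G w (Finset.univ \ (C \ W)) + ∑ v ∈ C \ W, w v := by
  classical
  have hKcov : ∀ v ∈ K, v ∉ coveredVerts M := fun v hv => by simpa [hK] using hv
  have hCcov : ∀ v ∈ C, v ∉ coveredVerts M := fun v hv => hKcov v ((hC v).mp hv).1
  have hclique := hM.isClique_compl_coveredVerts
  set X := {x ∈ coveredVerts M | ¬G.Adj u0 x}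
  have hX : ∀ u ∈ C, ∀ y, y ≠ u → (¬G.Adj u y ↔ y ∈ X) := by
    intro u hu y hyu
    by_cases hy : y ∈ coveredVerts M
    · simp [X, hy, ((hC u).mp hu).2 y hy]
    · simp [X, hy, hclique (hCcov u hu) hy hyu.symm]
  have hXM : #X ≤ #M := by
    obtain ⟨u1, hu1, hne⟩ := exists_mem_ne (hM1.trans_lt hCbig) u0
    exact hM.card_filter_not_adj_le (hKcov u0 hu0) (hCcov u1 hu1) hne.symm ((hC u1).mp hu1).2
  exact sigmaOn_eq_sigmaOn_sdiff_add_sum (hclique.subset fun v hv => hCcov v hv) hX hWC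
    (subset_univ W) sdiff_subset (subset_univ _) sdiff_disjoint (hWcard ▸ hXM)
    fun d hd u hu => hWheavy u hu d hd

/-- safeness of Rule 2: deleting all but the `|M̄|` heaviest vertices of a large
equivalence class `C` of `K = V(G) ∖ V(M̄)` decreases `σ` by exactly the total deleted weight. -/
theorem rule2_safe
    {V : Type*} [Fintype V] [DecidableEq V] (G : SimpleGraph V) (w : V → ℕ)
    (hw : ∀ v, 0 < w v)
    (M : Finset (Sym2 V)) (hM : IsMaxAntimatching G M) (hM1 : 1 ≤ M.card)
    (K : Finset V) (hK : K = Finset.univ \ coveredVerts M)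
    (C : Finset V) (u0 : V) (hu0 : u0 ∈ K)
    (hC : ∀ v : V, v ∈ C ↔ v ∈ K ∧ ∀ x ∈ coveredVerts M, (G.Adj v x ↔ G.Adj u0 x))
    (hCbig : M.card < C.card)
    (W : Finset V) (hWC : W ⊆ C) (hWcard : W.card = M.card)
    (hWheavy : ∀ u ∈ W, ∀ v ∈ C \ W, w v ≤ w u) :
    sigmaW G w = sigmaOn G w (Finset.univ \ (C \ W)) + ∑ v ∈ C \ W, w v :=
  rule2_safe_general G w M hM hM1 K hK C u0 hu0 hC hCbig W hWC hWcard hWheavy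
end

section
/- Let G be a finite simple graph, let c be a proper coloring of G, and let C be a nonempty clique of G all of whose vertices are pairwise closed twins (N[u] = N[u'] for all u,u' ∈ C). Let T = V(G) ∖ N[u₀] for some (equivalently, any) u₀ ∈ C be the common set of non-neighbors of the vertices of C. Then at most |T| vertices of C belong to color classes of c of size at least 2 (every other vertex of C forms a singleton color class). -/
open Finset

/-- in a proper coloring, at most `|T|` vertices of a nonempty clique of pairwise
closed twins lie in color classes of size at least 2, where `T` is their common set of
non-neighbors. -/
theorem twin_clique_few_nonsingletons
    {V : Type*} [Fintype V] [DecidableEq V] (G : SimpleGraph V)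
    (c : Finpartition (Finset.univ : Finset V)) (hc : IsProperColoring G c)
    (C : Finset V) (hCne : C.Nonempty) (hclique : G.IsClique (C : Set V))
    (htwins : ∀ u ∈ C, ∀ u' ∈ C, ∀ x : V, (x = u ∨ G.Adj u x) ↔ (x = u' ∨ G.Adj u' x))
    (u0 : V) (hu0 : u0 ∈ C)
    (T : Finset V) (hT : ∀ x : V, x ∈ T ↔ x ≠ u0 ∧ ¬ G.Adj u0 x) :
    {v ∈ (C : Set V) | ∃ S ∈ c.parts, v ∈ S ∧ 2 ≤ S.card}.ncard ≤ T.card := by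
  classical
  set A : Finset V := C.filter (fun v => ∃ S ∈ c.parts, v ∈ S ∧ 2 ≤ S.card) with hA
  have hset : {v ∈ (C : Set V) | ∃ S ∈ c.parts, v ∈ S ∧ 2 ≤ S.card} = ↑A := by
    ext v; simp [hA, Set.mem_sep_iff]
  rw [hset, Set.ncard_coe_finset]
  have key : ∀ v : V, ∃ p : V, v ∈ A →
      p ∈ T ∧ ∃ S ∈ c.parts, v ∈ S ∧ p ∈ S ∧ p ≠ v := by
    intro v
    by_cases hv : v ∈ A
    · obtain ⟨hvC, S, hS, hvS, hScard⟩ := by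
        simpa [hA] using hv
      obtain ⟨p, hpS, hpv⟩ := Finset.exists_mem_ne (s := S) (by omega) v
      refine ⟨p, fun _ => ?_⟩
      have hnadj : ¬ G.Adj v p := hc S hS v hvS p hpS
      have := (htwins v hvC u0 hu0 p).mp
      have hrhs : ¬ (p = u0 ∨ G.Adj u0 p) := by
        intro h
        exact absurd ((htwins u0 hu0 v hvC p).mp h) (by tauto)
      push_neg at hrhs
      exact ⟨(hT p).mpr ⟨hrhs.1, hrhs.2⟩, S, hS, hvS, hpS, hpv⟩
    · exact ⟨v, fun h => absurd h hv⟩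
  choose f hf using key
  apply Finset.card_le_card_of_injOn f
  · intro v hv; exact (hf v hv).1
  · intro v hv v' hv' heq
    obtain ⟨_, S, hS, hvS, hpS, _⟩ := hf v hv
    obtain ⟨_, S', hS', hvS', hpS', _⟩ := hf v' hv'
    have hSS : S = S' := c.eq_of_mem_parts hS hS' (heq ▸ hpS) hpS'
    subst hSS
    by_contra hne
    have hvC : v ∈ C := (Finset.mem_filter.mp hv).1
    have hv'C : v' ∈ C := (Finset.mem_filter.mp hv').1
    exact hc S hS v hvS v' hvS' (hclique hvC hv'C hne)
end

section
/- Let G be a finite simple graph with no universal vertex, let M̄ be a maximum antimatching of G with |M̄| = m ≥ 1, and let K = V(G) ∖ V(M̄). Then the number of distinct sets of the form N(v) ∩ V(M̄) with v ∈ K is at most 2^m − 1. -/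
open Finset

/-- if `G` has no universal vertex and `M̄` is a maximum antimatching with
`m ≥ 1` pairs, then the vertices of `K = V(G) ∖ V(M̄)` have at most `2^m - 1` distinct
neighborhoods inside `V(M̄)`. -/
theorem neighborhood_classes_le_pow
    {V : Type*} [Fintype V] [DecidableEq V] (G : SimpleGraph V) [DecidableRel G.Adj]
    (hnouniv : ¬ ∃ u : V, ∀ v : V, v ≠ u → G.Adj u v)
    (M : Finset (Sym2 V)) (hM : IsMaxAntimatching G M)
    (m : ℕ) (hm : M.card = m) (hm1 : 1 ≤ m)
    (K : Finset V) (hK : K = Finset.univ \ coveredVerts M) :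
    (K.image fun v => (coveredVerts M).filter fun x => G.Adj v x).card ≤ 2 ^ m - 1 := by
  classical
  subst hK
  subst hm
  set C := coveredVerts M with hC
  have hcov : ∀ x : V, x ∈ C ↔ ∃ e ∈ M, x ∈ e := by
    intro x; simp [hC, coveredVerts]
  have huncov : ∀ x : V, x ∈ Finset.univ \ C ↔ ∀ e ∈ M, x ∉ e := by
    intro x
    simp only [Finset.mem_sdiff, Finset.mem_univ, true_and, hcov]
    push_neg
    rfl
  -- the "fully adjacent pairs" map
  set F : Finset V → Finset (Sym2 V) := fun N => M.filter (fun e => ∀ x ∈ e, x ∈ N) with hF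
  set nb : V → Finset V := fun v => C.filter (fun x => G.Adj v x) with hnb
  -- generic contradiction helper
  have hmax : ∀ M' : Finset (Sym2 V), IsAntimatching G M' → M'.card ≤ M.card := hM.2
  have hanti := hM.1
  -- uncovered vertices: cannot insert a non-edge among uncovered vertices
  have hclique : ∀ u v : V, u ∉ C → v ∉ C → u ≠ v → G.Adj u v := by
    intro u v hu hv huv
    by_contra hadj
    have hne : s(u, v) ∉ M := by
      intro h
      exact hu ((hcov u).mpr ⟨_, h, by simp⟩)
    have hM' : IsAntimatching G (insert s(u, v) M) := by
      constructor
      · intro e he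
        rcases Finset.mem_insert.mp he with rfl | he
        · rw [SimpleGraph.mem_edgeSet, SimpleGraph.compl_adj]
          exact ⟨huv, hadj⟩
        · exact hanti.1 e he
      · intro e he f hf hef x hxe hxf
        rcases Finset.mem_insert.mp he with rfl | he2 <;>
          rcases Finset.mem_insert.mp hf with rfl | hf2
        · exact hef rfl
        · rcases Sym2.mem_iff.mp hxe with h | h
          · exact hu (h ▸ (hcov x).mpr ⟨f, hf2, hxf⟩)
          · exact hv (h ▸ (hcov x).mpr ⟨f, hf2, hxf⟩)
        · rcases Sym2.mem_iff.mp hxf with h | h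
          · exact hu (h ▸ (hcov x).mpr ⟨e, he2, hxe⟩)
          · exact hv (h ▸ (hcov x).mpr ⟨e, he2, hxe⟩)
        · exact hanti.2 e he2 f hf2 hef x hxe hxf
    have := hmax _ hM'
    rw [Finset.card_insert_of_notMem hne] at this
    omega
  -- main double swap
  have key : ∀ u v : V, u ∉ C → v ∉ C → F (nb u) = F (nb v) →
      ∀ a, a ∈ nb u → a ∉ nb v → False := by
    intro u v hu hv hFuv a hau hav
    have haC : a ∈ C := (Finset.mem_filter.mp hau).1
    have hadj_ua : G.Adj u a := (Finset.mem_filter.mp hau).2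
    have hnadj_va : ¬ G.Adj v a := by
      intro h; exact hav (Finset.mem_filter.mpr ⟨haC, h⟩)
    obtain ⟨e, heM, hae⟩ := (hcov a).mp haC
    set b := (Sym2.Mem.other hae) with hbdef
    have heab : s(a, b) = e := Sym2.other_spec hae
    have hbe : b ∈ e := Sym2.other_mem hae
    have hcompl : Gᶜ.Adj a b := by
      rw [← SimpleGraph.mem_edgeSet, heab]
      exact hanti.1 e heM
    have hab : a ≠ b := hcompl.1
    -- e is not in F (nb v)
    have heFv : e ∉ F (nb v) := by
      intro h
      exact hav ((Finset.mem_filter.mp h).2 a hae)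
    rw [← hFuv] at heFv
    have hnadj_ub : ¬ G.Adj u b := by
      intro h
      refine heFv (Finset.mem_filter.mpr ⟨heM, ?_⟩)
      intro x hx
      rw [← heab] at hx
      rcases Sym2.mem_iff.mp hx with h2 | h2
      · exact h2 ▸ hau
      · exact h2 ▸ Finset.mem_filter.mpr ⟨(hcov b).mpr ⟨e, heM, hbe⟩, h⟩
    have huv : u ≠ v := by
      rintro rfl; exact hnadj_va hadj_ua
    have hbC : b ∈ C := (hcov b).mpr ⟨e, heM, hbe⟩
    have hua : u ≠ a := by rintro rfl; exact hu haC
    have hub : u ≠ b := by rintro rfl; exact hu hbC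
    have hva : v ≠ a := by rintro rfl; exact hv haC
    have hvb : v ≠ b := by rintro rfl; exact hv hbC
    -- vertices a, b do not belong to other edges of M
    have hdisj : ∀ f ∈ M.erase e, a ∉ f ∧ b ∉ f ∧ u ∉ f ∧ v ∉ f := by
      intro f hf
      obtain ⟨hfe, hfM⟩ := Finset.mem_erase.mp hf
      refine ⟨hanti.2 e heM f hfM (Ne.symm hfe) a hae,
        hanti.2 e heM f hfM (Ne.symm hfe) b hbe, ?_, ?_⟩
      · intro h; exact hu ((hcov u).mpr ⟨f, hfM, h⟩)
      · intro h; exact hv ((hcov v).mpr ⟨f, hfM, h⟩)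
    set M' : Finset (Sym2 V) := insert s(v, a) (insert s(u, b) (M.erase e)) with hM'def
    have hmem' : ∀ g, g ∈ M' ↔ g = s(v, a) ∨ g = s(u, b) ∨ g ∈ M.erase e := by
      intro g; simp [hM'def]
    have hvertsva : ∀ x, x ∈ s(v, a) ↔ x = v ∨ x = a := fun x => Sym2.mem_iff
    have hvertsub : ∀ x, x ∈ s(u, b) ↔ x = u ∨ x = b := fun x => Sym2.mem_iff
    have hnotin : ∀ x, x ∈ s(v, a) → x ∉ s(u, b) := by
      intro x hx hx'
      rcases (hvertsva x).mp hx with h1 | h1 <;>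
        rcases (hvertsub x).mp hx' with h2 | h2
      · exact huv (h2.symm.trans h1)
      · exact hvb (h1.symm.trans h2)
      · exact hua (h2.symm.trans h1)
      · exact hab (h1.symm.trans h2)
    have hM'anti : IsAntimatching G M' := by
      constructor
      · intro g hg
        rcases (hmem' g).mp hg with rfl | rfl | hg
        · rw [SimpleGraph.mem_edgeSet, SimpleGraph.compl_adj]
          exact ⟨hva, hnadj_va⟩
        · rw [SimpleGraph.mem_edgeSet, SimpleGraph.compl_adj]
          exact ⟨hub, hnadj_ub⟩
        · exact hanti.1 g (Finset.mem_erase.mp hg).2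
      · intro e' he' f' hf' hef x hxe hxf
        rcases (hmem' e').mp he' with rfl | rfl | he2 <;>
          rcases (hmem' f').mp hf' with rfl | rfl | hf2
        · exact hef rfl
        · exact hnotin x hxe hxf
        · rcases (hvertsva x).mp hxe with h | h
          · exact (h ▸ (hdisj f' hf2).2.2.2) hxf
          · exact (h ▸ (hdisj f' hf2).1) hxf
        · exact hnotin x hxf hxe
        · exact hef rfl
        · rcases (hvertsub x).mp hxe with h | h
          · exact (h ▸ (hdisj f' hf2).2.2.1) hxf
          · exact (h ▸ (hdisj f' hf2).2.1) hxf
        · rcases (hvertsva x).mp hxf with h | h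
          · exact (h ▸ (hdisj e' he2).2.2.2) hxe
          · exact (h ▸ (hdisj e' he2).1) hxe
        · rcases (hvertsub x).mp hxf with h | h
          · exact (h ▸ (hdisj e' he2).2.2.1) hxe
          · exact (h ▸ (hdisj e' he2).2.1) hxe
        · exact hanti.2 e' (Finset.mem_erase.mp he2).2 f' (Finset.mem_erase.mp hf2).2
            hef x hxe hxf
    have h1 : s(u, b) ∉ M.erase e := by
      intro h
      exact hu ((hcov u).mpr ⟨_, (Finset.mem_erase.mp h).2, by simp⟩)
    have h2 : s(v, a) ∉ insert s(u, b) (M.erase e) := by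
      intro h
      rcases Finset.mem_insert.mp h with h | h
      · exact hnotin v (by simp) (h ▸ (by simp))
      · exact hv ((hcov v).mpr ⟨_, (Finset.mem_erase.mp h).2, by simp⟩)
    have hcard : M'.card = M.card + 1 := by
      rw [hM'def, Finset.card_insert_of_notMem h2, Finset.card_insert_of_notMem h1,
        Finset.card_erase_of_mem heM]
      have : 1 ≤ M.card := Finset.card_pos.mpr ⟨e, heM⟩
      omega
    have := hmax _ hM'anti
    omega
  -- now the counting argument
  have hmapsto : ∀ N ∈ (Finset.univ \ C).image nb, F N ∈ M.powerset.erase M := by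
    intro N hN
    obtain ⟨v, hv, rfl⟩ := Finset.mem_image.mp hN
    have hvC : v ∉ C := (Finset.mem_sdiff.mp hv).2
    refine Finset.mem_erase.mpr ⟨?_, Finset.mem_powerset.mpr (Finset.filter_subset _ _)⟩
    intro hFeq
    apply hnouniv
    refine ⟨v, fun u hu => ?_⟩
    by_cases huC : u ∈ C
    · obtain ⟨e, heM, hue⟩ := (hcov u).mp huC
      have : e ∈ F (nb v) := hFeq ▸ heM
      have := (Finset.mem_filter.mp this).2 u hue
      exact (Finset.mem_filter.mp this).2
    · exact hclique v u hvC huC (Ne.symm hu)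
  have hinj : Set.InjOn F ((Finset.univ \ C).image nb : Finset (Finset V)) := by
    intro N1 hN1 N2 hN2 hFeq
    simp only [Finset.coe_image, Set.mem_image, Finset.mem_coe] at hN1 hN2
    obtain ⟨u, hu, rfl⟩ := hN1
    obtain ⟨v, hv, rfl⟩ := hN2
    have huC : u ∉ C := (Finset.mem_sdiff.mp hu).2
    have hvC : v ∉ C := (Finset.mem_sdiff.mp hv).2
    by_contra hne
    rcases Finset.not_subset.mp (fun h => hne (Finset.Subset.antisymm h (by
        intro a ha
        by_contra ha'
        exact key v u hvC huC hFeq.symm a ha ha'))) with ⟨a, ha1, ha2⟩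
    exact key u v huC hvC hFeq a ha1 ha2
  have hle := Finset.card_le_card_of_injOn F hmapsto hinj
  have hcard2 : (M.powerset.erase M).card = 2 ^ M.card - 1 := by
    rw [Finset.card_erase_of_mem (Finset.mem_powerset_self M), Finset.card_powerset]
  rw [hcard2] at hle
  exact hle
end

section
/- Let G be a finite interval graph with no universal vertex, let p be the number of maximal cliques of G, and let K be a clique of G. Then the number of distinct sets of the form N(v) ∖ K with v ∈ K is at most ⌊(p+1)/2⌋ · ⌈(p+1)/2⌉ − 1. -/
/-!
Let `t` be the smallest right endpoint of an interval of `K`; it lies in every interval of `K`.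
For `x ∈ K`, `N(x) ∖ K` is the intersection of the outside vertices starting before `x` ends and
of those ending after `x` starts. These two families take `a` and `b` values, so there are at most
`a * b` sets `N(x) ∖ K`. A value of the first family is determined by the point
`max t (largest left endpoint ≤ r x of an outside vertex)`, one of the second by the mirror point
`≤ t`, and at least `a + b - 1` of these points are distinct. Of any two of them, some interval
through the smaller one ends before some interval through the larger one starts, so the cliques
of intervals through these points lie in distinct maximal cliques: `a + b - 1 ≤ p`. With no
universal vertex, either some vertex misses `K`, which gives one more maximal clique, or no vertex
of `K` attains both largest values, which removes one of the `a * b` pairs. As `c * d ≤ ⌊n/2⌋⌈n/2⌉`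
whenever `c + d ≤ n`, either way the bound follows.
-/

open Finset

namespace SimpleGraph

variable {V : Type*} (G : SimpleGraph V)

theorem card_le_ncard_maximal_cliques [Finite V] {ι : Type*} (P : Finset ι) (Q : ι → Set V)
    (hQ : ∀ i ∈ P, G.IsClique (Q i))
    (hPQ : (P : Set ι).Pairwise fun i j => ¬ G.IsClique (Q i ∪ Q j)) :
    #P ≤ {s : Set V | Maximal G.IsClique s}.ncard := by
  have hM : ∀ i ∈ P, ∃ M, Q i ⊆ M ∧ Maximal G.IsClique M := fun i hi =>
    Finite.exists_le_maximal (hQ i hi)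
  choose! M hQM hMmax using hM
  rw [← Set.ncard_coe_finset]
  refine Set.ncard_le_ncard_of_injOn M hMmax fun i hi j hj hij => ?_
  by_contra hne
  exact hPQ hi hj hne <| (hMmax i hi).prop.subset <| Set.union_subset (hQM i hi) (hij ▸ hQM j hj)

theorem card_add_one_le_ncard_maximal_cliques [Finite V] {ι : Type*} (P : Finset ι)
    (Q : ι → Set V) (hQ : ∀ i ∈ P, G.IsClique (Q i))
    (hPQ : (P : Set ι).Pairwise fun i j => ¬ G.IsClique (Q i ∪ Q j))
    (y : V) (hy : ∀ i ∈ P, ∃ x ∈ Q i, x ≠ y ∧ ¬ G.Adj x y) :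
    #P + 1 ≤ {s : Set V | Maximal G.IsClique s}.ncard := by
  have hconf : ∀ i ∈ P, ¬ G.IsClique (Q i ∪ {y}) := fun i hi hcl => by
    obtain ⟨x, hx, hxy, hadj⟩ := hy i hi
    exact hadj (hcl (Or.inl hx) (Or.inr rfl) hxy)
  rw [← card_insertNone]
  refine G.card_le_ncard_maximal_cliques P.insertNone (fun i => i.elim {y} Q) ?_ ?_
  · rintro (_ | i) hi
    · exact G.isClique_singleton y
    · exact hQ i (mem_insertNone.1 hi i rfl)
  · rintro (_ | i) hi (_ | j) hj hij
    · exact (hij rfl).elim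
    · rw [Set.union_comm]; exact hconf j (mem_insertNone.1 hj j rfl)
    · exact hconf i (mem_insertNone.1 hi i rfl)
    · exact hPQ (mem_insertNone.1 hi i rfl) (mem_insertNone.1 hj j rfl) (by simpa using hij)

variable {α : Type*} [LinearOrder α]

structure IsIntervalRep (l r : V → α) : Prop where
  le : ∀ v, l v ≤ r v
  adj_iff : ∀ u v, G.Adj u v ↔ u ≠ v ∧ l u ≤ r v ∧ l v ≤ r u

end SimpleGraph

theorem IsIntervalGraph.exists_isIntervalRep {V : Type*} {G : SimpleGraph V}
    (h : IsIntervalGraph G) : ∃ l r : V → ℝ, G.IsIntervalRep l r := by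
  obtain ⟨f, hle, hadj⟩ := h
  refine ⟨fun v => (f v).1, fun v => (f v).2, hle, fun u v => ?_⟩
  rw [hadj, Set.Icc_inter_Icc, Set.nonempty_Icc, sup_le_iff, le_inf_iff, le_inf_iff]
  have hu := hle u
  have hv := hle v
  constructor
  · rintro ⟨hne, ⟨-, h₁⟩, h₂, -⟩
    exact ⟨hne, h₁, h₂⟩
  · rintro ⟨hne, h₁, h₂⟩
    exact ⟨hne, ⟨hu, h₁⟩, h₂, hv⟩

section Gaps

variable {V α : Type*} [LinearOrder α]

def pointClique (l r : V → α) (s : α) : Set V := {v | s ∈ Set.Icc (l v) (r v)}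

def IsGap (l r : V → α) (s s' : α) : Prop :=
  ∃ x ∈ pointClique l r s, ∃ y ∈ pointClique l r s', r x < l y

def IsGapped (l r : V → α) (P : Finset α) : Prop :=
  ∀ s ∈ P, ∀ s' ∈ P, s < s' → IsGap l r s s'

theorem IsGapped.ofDual {l r : V → α} {P : Finset αᵒᵈ}
    (hP : IsGapped (fun v => OrderDual.toDual (r v)) (fun v => OrderDual.toDual (l v)) P) :
    IsGapped l r (P.map OrderDual.ofDual.toEmbedding) := by
  simp only [IsGapped, mem_map_equiv]
  intro s hs s' hs' hlt
  obtain ⟨y, hy, x, hx, hyx⟩ := hP _ hs' _ hs hlt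
  exact ⟨x, ⟨hx.2, hx.1⟩, y, ⟨hy.2, hy.1⟩, hyx⟩

/-- For `x ∈ K`, the class `{u ∈ B | l u ≤ r x}` is determined by the point
`max t (max {l u | u ∈ B, l u ≤ r x})`. -/
theorem exists_isGapped_ge [DecidableEq V] {l r : V → α} (K B : Finset V)
    (hle : ∀ v, l v ≤ r v) {t : α} (ht : ∀ x ∈ K, t ∈ Set.Icc (l x) (r x)) :
    ∃ P : Finset α, #(K.image fun x => B.filter (l · ≤ r x)) ≤ #P ∧ IsGapped l r P ∧
      (∀ s ∈ P, t ≤ s ∧ ∃ x ∈ K, x ∈ pointClique l r s) ∧ ∀ s ∈ P, s ≠ t → ∃ u ∈ B, l u = s := by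
  let φ : V → α := fun x => (insert t ((B.filter (l · ≤ r x)).image l)).max' (insert_nonempty _ _)
  have ht_le : ∀ x, t ≤ φ x := fun x => le_max' _ _ (mem_insert_self _ _)
  have hle_r : ∀ x ∈ K, φ x ≤ r x := fun x hx => max'_le _ _ _ <| by
    simpa using ⟨(ht x hx).2, fun _ _ _ h hu => hu ▸ h⟩
  have hφ_mem : ∀ x, φ x = t ∨ ∃ u ∈ B, l u ≤ r x ∧ l u = φ x := fun x => by
    simpa [eq_comm, and_assoc] using
      max'_mem _ (insert_nonempty t ((B.filter (l · ≤ r x)).image l))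
  have hle_iff : ∀ x ∈ K, ∀ u ∈ B, l u ≤ r x ↔ l u ≤ φ x := fun x hx u hu =>
    ⟨fun h => le_max' _ _ (mem_insert_of_mem (mem_image_of_mem _ (mem_filter.2 ⟨hu, h⟩))),
      fun h => h.trans (hle_r x hx)⟩
  refine ⟨K.image φ, ?_, ?_, ?_, ?_⟩
  · calc #(K.image fun x => B.filter (l · ≤ r x))
        = #((K.image φ).image fun s => B.filter (l · ≤ s)) := by
          rw [image_image]
          exact congrArg card (image_congr fun x hx => filter_congr (hle_iff x hx))
      _ ≤ #(K.image φ) := card_image_le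
  · simp only [IsGapped, forall_mem_image]
    intro x hx x' _ hlt
    obtain h | ⟨u, hu, -, hu_eq⟩ := hφ_mem x'
    · exact absurd (h ▸ hlt) (ht_le x).not_gt
    refine ⟨x, ⟨(ht x hx).1.trans (ht_le x), hle_r x hx⟩, u, ⟨hu_eq.le, hu_eq ▸ hle u⟩, ?_⟩
    by_contra! h
    exact hlt.not_ge (hu_eq ▸ (hle_iff x hx u hu).1 h)
  · simp only [forall_mem_image]
    exact fun x hx => ⟨ht_le x, x, hx, (ht x hx).1.trans (ht_le x), hle_r x hx⟩
  · simp only [forall_mem_image]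
    intro x _ hne
    obtain h | ⟨u, hu, -, hu_eq⟩ := hφ_mem x
    · exact (hne h).elim
    · exact ⟨u, hu, hu_eq⟩

theorem exists_isGapped_le [DecidableEq V] {l r : V → α} (K B : Finset V)
    (hle : ∀ v, l v ≤ r v) {t : α} (ht : ∀ x ∈ K, t ∈ Set.Icc (l x) (r x)) :
    ∃ P : Finset α, #(K.image fun x => B.filter (l x ≤ r ·)) ≤ #P ∧ IsGapped l r P ∧
      (∀ s ∈ P, s ≤ t ∧ ∃ x ∈ K, x ∈ pointClique l r s) ∧ ∀ s ∈ P, s ≠ t → ∃ z ∈ B, r z = s := by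
  obtain ⟨P, hcard, hgap, hstab, hpts⟩ :=
    exists_isGapped_ge (l := fun v => OrderDual.toDual (r v))
      (r := fun v => OrderDual.toDual (l v)) (t := OrderDual.toDual t) K B hle
      fun x hx => ⟨(ht x hx).2, (ht x hx).1⟩
  refine ⟨P.map OrderDual.ofDual.toEmbedding, by simpa using hcard, hgap.ofDual, ?_, ?_⟩
  · simp only [mem_map_equiv]
    intro s hs
    obtain ⟨hts, x, hx, hxs⟩ := hstab _ hs
    exact ⟨hts, x, hx, hxs.2, hxs.1⟩
  · simp only [mem_map_equiv]
    exact fun s hs hne => hpts _ hs hne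

end Gaps

namespace SimpleGraph.IsIntervalRep

variable {V α : Type*} [LinearOrder α] {G : SimpleGraph V} {l r : V → α}

theorem isClique_pointClique (hrep : G.IsIntervalRep l r) (s : α) :
    G.IsClique (pointClique l r s) := fun u hu v hv hne =>
  (hrep.adj_iff u v).2 ⟨hne, hu.1.trans hv.2, hv.1.trans hu.2⟩

theorem not_isClique_union_of_isGap (hrep : G.IsIntervalRep l r) {s s' : α}
    (h : IsGap l r s s') : ¬ G.IsClique (pointClique l r s ∪ pointClique l r s') := by
  rintro hcl
  obtain ⟨x, hx, y, hy, hxy⟩ := h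
  have hne : x ≠ y := by
    rintro rfl
    exact hxy.not_ge (hrep.le x)
  exact hxy.not_ge ((hrep.adj_iff x y).1 (hcl (Or.inl hx) (Or.inr hy) hne)).2.2

theorem pairwise_not_isClique_union (hrep : G.IsIntervalRep l r) {P : Finset α}
    (hP : IsGapped l r P) :
    (P : Set α).Pairwise fun s s' => ¬ G.IsClique (pointClique l r s ∪ pointClique l r s') := by
  intro s hs s' hs' hne
  rcases hne.lt_or_gt with hlt | hlt
  · exact hrep.not_isClique_union_of_isGap (hP s hs s' hs' hlt)
  · rw [Set.union_comm]
    exact hrep.not_isClique_union_of_isGap (hP s' hs' s hs hlt)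

theorem card_le_ncard_maximal_cliques [Finite V] (hrep : G.IsIntervalRep l r) {P : Finset α}
    (hP : IsGapped l r P) : #P ≤ {s : Set V | Maximal G.IsClique s}.ncard :=
  G.card_le_ncard_maximal_cliques P _ (fun s _ => hrep.isClique_pointClique s)
    (hrep.pairwise_not_isClique_union hP)

theorem card_add_one_le_ncard_maximal_cliques [Finite V] (hrep : G.IsIntervalRep l r)
    {P : Finset α} (hP : IsGapped l r P) (y : V)
    (hy : ∀ s ∈ P, ∃ x ∈ pointClique l r s, x ≠ y ∧ ¬ G.Adj x y) :
    #P + 1 ≤ {s : Set V | Maximal G.IsClique s}.ncard :=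
  G.card_add_one_le_ncard_maximal_cliques P _ (fun s _ => hrep.isClique_pointClique s)
    (hrep.pairwise_not_isClique_union hP) y hy

theorem le_of_isClique (hrep : G.IsIntervalRep l r) {K : Set V} (hK : G.IsClique K)
    {x y : V} (hx : x ∈ K) (hy : y ∈ K) : l x ≤ r y := by
  obtain rfl | hne := eq_or_ne x y
  · exact hrep.le x
  · exact ((hrep.adj_iff x y).1 (hK hx hy hne)).2.1

/-- The two families are counted by gapped points on either side of `t = min_K r`; only `t` can be
counted twice. -/
theorem exists_isGapped [DecidableEq V] (hrep : G.IsIntervalRep l r) {K : Finset V}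
    (hK : G.IsClique (K : Set V)) (hne : K.Nonempty) (B : Finset V) :
    ∃ P : Finset α, #(K.image fun x => B.filter (l · ≤ r x)) +
        #(K.image fun x => B.filter (l x ≤ r ·)) ≤ #P + 1 ∧
      IsGapped l r P ∧ ∀ s ∈ P, ∃ x ∈ K, x ∈ pointClique l r s := by
  obtain ⟨x₀, hx₀, hmin⟩ := K.exists_min_image r hne
  set t := r x₀
  have ht : ∀ x ∈ K, t ∈ Set.Icc (l x) (r x) := fun x hx =>
    ⟨hrep.le_of_isClique hK hx hx₀, hmin x hx⟩
  obtain ⟨R, hR, hRgap, hRstab, hRpts⟩ := exists_isGapped_ge K B hrep.le ht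
  obtain ⟨L, hL, hLgap, hLstab, hLpts⟩ := exists_isGapped_le K B hrep.le ht
  have hR_gt : ∀ s ∈ R.erase t, t < s := fun s hs =>
    (hRstab s (mem_of_mem_erase hs)).1.lt_of_ne' (ne_of_mem_erase hs)
  have hL_le : ∀ s ∈ L, s ≤ t := fun s hs => (hLstab s hs).1
  have hcross : ∀ s ∈ L, ∀ s' ∈ R.erase t, IsGap l r s s' := by
    intro s hs s' hs'
    obtain ⟨u, -, rfl⟩ := hRpts s' (mem_of_mem_erase hs') (ne_of_mem_erase hs')
    have hu : u ∈ pointClique l r (l u) := ⟨le_rfl, hrep.le u⟩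
    obtain rfl | hst := eq_or_ne s t
    · exact ⟨x₀, ht x₀ hx₀, u, hu, hR_gt _ hs'⟩
    · obtain ⟨z, -, rfl⟩ := hLpts s hs hst
      exact ⟨z, ⟨hrep.le z, le_rfl⟩, u, hu, (hL_le _ hs).trans_lt (hR_gt _ hs')⟩
  have hdisj : Disjoint L (R.erase t) := Finset.disjoint_left.2 fun _ hs hs' =>
    (hL_le _ hs).not_gt (hR_gt _ hs')
  refine ⟨L ∪ R.erase t, ?_, ?_, ?_⟩
  · rw [card_union_of_disjoint hdisj]
    have := pred_card_le_card_erase (s := R) (a := t)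
    omega
  · intro s hs s' hs' hlt
    rcases mem_union.1 hs, mem_union.1 hs' with ⟨hs | hs, hs' | hs'⟩
    · exact hLgap s hs s' hs' hlt
    · exact hcross s hs s' hs'
    · exact absurd ((hR_gt s hs).trans hlt) (hL_le s' hs').not_gt
    · exact hRgap s (mem_of_mem_erase hs) s' (mem_of_mem_erase hs') hlt
  · intro s hs
    rcases mem_union.1 hs with hs | hs
    · exact (hLstab s hs).2
    · exact (hRstab s (mem_of_mem_erase hs)).2

section Fintype

variable [Fintype V] [DecidableEq V]

theorem neighborFinset_sdiff_eq [DecidableRel G.Adj] (hrep : G.IsIntervalRep l r)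
    {K : Finset V} {x : V} (hx : x ∈ K) :
    G.neighborFinset x \ K = Kᶜ.filter (l · ≤ r x) ∩ Kᶜ.filter (l x ≤ r ·) := by
  ext u
  simp only [mem_sdiff, mem_neighborFinset, hrep.adj_iff, mem_inter, mem_filter, mem_compl]
  constructor
  · rintro ⟨⟨-, h₁, h₂⟩, hu⟩
    exact ⟨⟨hu, h₂⟩, hu, h₁⟩
  · rintro ⟨⟨hu, h₂⟩, -, h₁⟩
    exact ⟨⟨fun h => hu (h ▸ hx), h₁, h₂⟩, hu⟩

theorem adj_of_forall_exists_adj (hrep : G.IsIntervalRep l r) {K : Finset V}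
    (hK : G.IsClique (K : Set V)) (hcov : ∀ v ∉ K, ∃ x ∈ K, G.Adj x v)
    {x₁ x₂ : V} (hx₁ : ∀ x ∈ K, r x ≤ r x₁) (hx₂ : ∀ x ∈ K, l x₂ ≤ l x) {x : V} (hx : x ∈ K)
    (h₁ : Kᶜ.filter (l · ≤ r x) = Kᶜ.filter (l · ≤ r x₁))
    (h₂ : Kᶜ.filter (l x ≤ r ·) = Kᶜ.filter (l x₂ ≤ r ·)) :
    ∀ v, v ≠ x → G.Adj x v := by
  intro v hvx
  by_cases hv : v ∈ K
  · exact hK hx hv hvx.symm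
  obtain ⟨x', hx', hadj⟩ := hcov v hv
  obtain ⟨-, hx'v, hvx'⟩ := (hrep.adj_iff x' v).1 hadj
  have hv₁ : v ∈ Kᶜ.filter (l · ≤ r x) :=
    h₁ ▸ mem_filter.2 ⟨mem_compl.2 hv, hvx'.trans (hx₁ x' hx')⟩
  have hv₂ : v ∈ Kᶜ.filter (l x ≤ r ·) :=
    h₂ ▸ mem_filter.2 ⟨mem_compl.2 hv, (hx₂ x' hx').trans hx'v⟩
  exact (hrep.adj_iff x v).2 ⟨hvx.symm, (mem_filter.1 hv₂).2, (mem_filter.1 hv₁).2⟩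

end Fintype

end SimpleGraph.IsIntervalRep

namespace Finset

variable {ι β γ δ : Type*} [DecidableEq β] [DecidableEq γ] [DecidableEq δ]

theorem card_image_le_card_image_prod (s : Finset ι) (f : ι → β) (g : ι → γ)
    (h : β → γ → δ) : #(s.image fun i => h (f i) (g i)) ≤ #(s.image fun i => (f i, g i)) := by
  rw [show (fun i => h (f i) (g i)) = (fun q => h q.1 q.2) ∘ fun i => (f i, g i) from rfl,
    ← image_image]
  exact card_image_le

theorem card_image_le_mul (s : Finset ι) (f : ι → β) (g : ι → γ) (h : β → γ → δ) :
    #(s.image fun i => h (f i) (g i)) ≤ #(s.image f) * #(s.image g) := by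
  calc #(s.image fun i => h (f i) (g i))
      ≤ #(s.image fun i => (f i, g i)) := card_image_le_card_image_prod s f g h
    _ ≤ #(s.image f ×ˢ s.image g) := card_le_card fun q hq => by
      obtain ⟨i, hi, rfl⟩ := mem_image.1 hq
      exact mem_product.2 ⟨mem_image_of_mem f hi, mem_image_of_mem g hi⟩
    _ = #(s.image f) * #(s.image g) := card_product _ _

theorem card_image_lt_mul (s : Finset ι) (f : ι → β) (g : ι → γ) (h : β → γ → δ) {i₁ i₂ : ι}
    (h₁ : i₁ ∈ s) (h₂ : i₂ ∈ s) (hne : ∀ i ∈ s, f i = f i₁ → g i ≠ g i₂) :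
    #(s.image fun i => h (f i) (g i)) < #(s.image f) * #(s.image g) := by
  calc #(s.image fun i => h (f i) (g i))
      ≤ #(s.image fun i => (f i, g i)) := card_image_le_card_image_prod s f g h
    _ ≤ #((s.image f ×ˢ s.image g).erase (f i₁, g i₂)) := card_le_card fun q hq => by
      obtain ⟨i, hi, rfl⟩ := mem_image.1 hq
      exact mem_erase.2 ⟨fun heq => hne i hi (Prod.mk.inj heq).1 (Prod.mk.inj heq).2,
        mem_product.2 ⟨mem_image_of_mem f hi, mem_image_of_mem g hi⟩⟩
    _ < #(s.image f ×ˢ s.image g) :=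
      card_erase_lt_of_mem (mem_product.2 ⟨mem_image_of_mem f h₁, mem_image_of_mem g h₂⟩)
    _ = #(s.image f) * #(s.image g) := card_product _ _

end Finset

theorem Nat.mul_le_div_two_mul_of_add_le {a b n : ℕ} (h : a + b ≤ n) :
    a * b ≤ n / 2 * ((n + 1) / 2) := by
  obtain ⟨k, rfl | rfl⟩ := Nat.even_or_odd' n
  · rw [show (2 * k + 1) / 2 = k by omega, show 2 * k / 2 = k by omega]
    nlinarith [sq_nonneg ((a : ℤ) - b)]
  · rw [show (2 * k + 1 + 1) / 2 = k + 1 by omega, show (2 * k + 1) / 2 = k by omega]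
    rcases (by omega : a ≤ k ∨ b ≤ k) with h' | h' <;> nlinarith

theorem Nat.div_two_mul_lt {n : ℕ} (hn : 1 ≤ n) :
    n / 2 * ((n + 1) / 2) < (n + 1) / 2 * ((n + 2) / 2) := by
  obtain ⟨k, rfl | rfl⟩ := Nat.even_or_odd' n
  · rw [show (2 * k + 1) / 2 = k by omega, show 2 * k / 2 = k by omega,
      show (2 * k + 2) / 2 = k + 1 by omega]
    nlinarith
  · rw [show (2 * k + 1 + 1) / 2 = k + 1 by omega, show (2 * k + 1) / 2 = k by omega,
      show (2 * k + 1 + 2) / 2 = k + 1 by omega]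
    nlinarith

/-- in an interval graph with no universal vertex and `p` maximal cliques, the
vertices of a clique `K` have at most `⌊(p+1)/2⌋·⌈(p+1)/2⌉ - 1` distinct sets `N(v) ∖ K`. -/
theorem interval_clique_neighborhood_classes
    {V : Type*} [Fintype V] [DecidableEq V] (G : SimpleGraph V) [DecidableRel G.Adj]
    (hint : IsIntervalGraph G)
    (hnouniv : ¬ ∃ u : V, ∀ v : V, v ≠ u → G.Adj u v)
    (p : ℕ) (hp : {s : Set V | Maximal G.IsClique s}.ncard = p)
    (K : Finset V) (hclique : G.IsClique (K : Set V)) :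
    (K.image fun v => G.neighborFinset v \ K).card ≤ (p + 1) / 2 * ((p + 2) / 2) - 1 := by
  obtain ⟨l, r, hrep⟩ := hint.exists_isIntervalRep
  rcases K.eq_empty_or_nonempty with rfl | hK
  · simp
  obtain ⟨P, hcard, hgap, hstab⟩ := hrep.exists_isGapped hclique hK Kᶜ
  rw [image_congr fun x hx => hrep.neighborFinset_sdiff_eq hx]
  suffices #(K.image fun x => Kᶜ.filter (l · ≤ r x) ∩ Kᶜ.filter (l x ≤ r ·)) <
      (p + 1) / 2 * ((p + 2) / 2) by omega
  by_cases hy : ∃ y ∉ K, ∀ x ∈ K, ¬ G.Adj x y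
  · obtain ⟨y, hyK, hy⟩ := hy
    have hP : #P + 1 ≤ p := hp ▸ hrep.card_add_one_le_ncard_maximal_cliques hgap y fun s hs => by
      obtain ⟨x, hx, hxs⟩ := hstab s hs
      exact ⟨x, hxs, fun h => hyK (h ▸ hx), hy x hx⟩
    have ha : 0 < #(K.image fun x => Kᶜ.filter (l · ≤ r x)) := card_pos.2 (hK.image _)
    calc _ ≤ _ := card_image_le_mul K _ _ (· ∩ ·)
      _ ≤ p / 2 * ((p + 1) / 2) := Nat.mul_le_div_two_mul_of_add_le (by omega)
      _ < _ := Nat.div_two_mul_lt (by omega)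
  · push Not at hy
    obtain ⟨x₁, hx₁, hmax⟩ := K.exists_max_image r hK
    obtain ⟨x₂, hx₂, hmin⟩ := K.exists_min_image l hK
    have hP : #P ≤ p := hp ▸ hrep.card_le_ncard_maximal_cliques hgap
    calc _ < _ := card_image_lt_mul K _ _ (· ∩ ·) hx₁ hx₂ fun x hx h₁ h₂ =>
          hnouniv ⟨x, hrep.adj_of_forall_exists_adj hclique hy hmax hmin hx h₁ h₂⟩
      _ ≤ _ := Nat.mul_le_div_two_mul_of_add_le (by omega)
end

section
/- Let G be a finite simple graph with no universal vertex, let M̄ be a maximum antimatching of G with |M̄| = m, let K = V(G) ∖ V(M̄), and let d ≥ 1 be an integer such that every vertex of K has at most d non-neighbors in G. Then the number of distinct sets of the form N(v) ∩ V(M̄) with v ∈ K is at most m + Σ_{i=1}^{d} C(m,i), where C(m,i) denotes the binomial coefficient. -/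
open Finset

/-- if `G` has no universal vertex, `M̄` is a maximum antimatching with `m`
pairs, and every vertex of `K = V(G) ∖ V(M̄)` has at most `d` non-neighbors in `G`, then the
vertices of `K` have at most `m + ∑_{i=1}^d C(m,i)` distinct neighborhoods inside `V(M̄)`. -/
theorem neighborhood_classes_bounded_nonneighbors
    {V : Type*} [Fintype V] [DecidableEq V] (G : SimpleGraph V) [DecidableRel G.Adj]
    (hnouniv : ¬ ∃ u : V, ∀ v : V, v ≠ u → G.Adj u v)
    (M : Finset (Sym2 V)) (hM : IsMaxAntimatching G M)
    (m : ℕ) (hm : M.card = m)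
    (K : Finset V) (hK : K = Finset.univ \ coveredVerts M)
    (d : ℕ) (hd : 1 ≤ d)
    (hdeg : ∀ v ∈ K, (Finset.univ.filter fun x => x ≠ v ∧ ¬ G.Adj v x).card ≤ d) :
    (K.image fun v => (coveredVerts M).filter fun x => G.Adj v x).card ≤
      m + ∑ i ∈ Finset.Icc 1 d, m.choose i := by

  classical
  subst hm
  subst hK
  set C : Finset V := coveredVerts M with hCdef
  have hmemC : ∀ v : V, v ∈ C ↔ ∃ e ∈ M, v ∈ e := by
    intro v
    simp [hCdef, coveredVerts]
  set Kset : Finset V := Finset.univ \ C with hKdef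
  have hKC : ∀ v ∈ Kset, v ∉ C := fun v hv => (Finset.mem_sdiff.1 hv).2
  have hKnotC : ∀ v ∈ Kset, ∀ e ∈ M, v ∉ e := by
    intro v hv e he hve
    exact hKC v hv ((hmemC v).2 ⟨e, he, hve⟩)
  have hCK : ∀ v : V, v ∉ Kset → v ∈ C := by
    intro v hv
    by_contra h
    exact hv (Finset.mem_sdiff.2 ⟨Finset.mem_univ v, h⟩)
  have hKneC : ∀ v ∈ Kset, ∀ x ∈ C, v ≠ x := by
    intro v hv x hx h
    exact hKC v hv (h ▸ hx)
  -- K is a clique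
  have hclique : ∀ v ∈ Kset, ∀ w ∈ Kset, v ≠ w → G.Adj v w := by
    intro v hv w hw hvw
    by_contra hadj
    have hnew : IsAntimatching G (insert s(v, w) M) := by
      constructor
      · intro e he
        rcases Finset.mem_insert.1 he with rfl | he
        · rw [SimpleGraph.mem_edgeSet, SimpleGraph.compl_adj]
          exact ⟨hvw, hadj⟩
        · exact hM.1.1 e he
      · intro e he f hf hef x hxe hxf
        rcases Finset.mem_insert.1 he with he' | he'
        · rcases Finset.mem_insert.1 hf with hf' | hf'
          · exact hef (he'.trans hf'.symm)
          · subst he'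
            rcases Sym2.mem_iff.1 hxe with rfl | rfl
            · exact hKnotC x hv f hf' hxf
            · exact hKnotC x hw f hf' hxf
        · rcases Finset.mem_insert.1 hf with hf' | hf'
          · subst hf'
            rcases Sym2.mem_iff.1 hxf with rfl | rfl
            · exact hKnotC x hv e he' hxe
            · exact hKnotC x hw e he' hxe
          · exact hM.1.2 e he' f hf' hef x hxe hxf
    have hni : s(v, w) ∉ M := fun hmem => hKnotC v hv _ hmem (by simp)
    have := hM.2 _ hnew
    rw [Finset.card_insert_of_notMem hni] at this
    omega
  -- the swap lemma
  have hswap : ∀ a b : V, s(a, b) ∈ M → ∀ v ∈ Kset, ¬ G.Adj v a →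
      ∀ u ∈ Kset, ¬ G.Adj u b → u = v := by
    intro a b hab v hv hva u hu hub
    by_contra huv
    have haC : a ∈ C := (hmemC a).2 ⟨s(a, b), hab, by simp⟩
    have hbC : b ∈ C := (hmemC b).2 ⟨s(a, b), hab, by simp⟩
    have hane : a ≠ b := by
      have := hM.1.1 _ hab
      rw [SimpleGraph.mem_edgeSet, SimpleGraph.compl_adj] at this
      exact this.1
    have hvb : v ≠ b := hKneC v hv b hbC
    have hva' : v ≠ a := hKneC v hv a haC
    have hub' : u ≠ b := hKneC u hu b hbC
    have hua : u ≠ a := hKneC u hu a haC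
    -- a not in edges of M other than s(a,b); same for b
    have haonly : ∀ g ∈ M, g ≠ s(a, b) → a ∉ g := by
      intro g hg hgne
      exact hM.1.2 _ hab g hg (Ne.symm hgne) a (by simp)
    have hbonly : ∀ g ∈ M, g ≠ s(a, b) → b ∉ g := by
      intro g hg hgne
      exact hM.1.2 _ hab g hg (Ne.symm hgne) b (by simp)
    set M' : Finset (Sym2 V) := insert s(v, a) (insert s(u, b) (M.erase s(a, b))) with hM'def
    have hmemM' : ∀ e ∈ M', e = s(v, a) ∨ e = s(u, b) ∨ (e ∈ M ∧ e ≠ s(a, b)) := by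
      intro e he
      rcases Finset.mem_insert.1 he with rfl | he
      · exact Or.inl rfl
      rcases Finset.mem_insert.1 he with rfl | he
      · exact Or.inr (Or.inl rfl)
      · exact Or.inr (Or.inr ⟨Finset.mem_of_mem_erase he, Finset.ne_of_mem_erase he⟩)
    have hnotinva : ∀ e ∈ M, e ≠ s(a, b) → ∀ x, x ∈ e → x ∉ s(v, a) := by
      intro e he hene x hxe hxs
      rcases Sym2.mem_iff.1 hxs with rfl | rfl
      · exact hKnotC x hv e he hxe
      · exact haonly e he hene hxe
    have hnotinub : ∀ e ∈ M, e ≠ s(a, b) → ∀ x, x ∈ e → x ∉ s(u, b) := by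
      intro e he hene x hxe hxs
      rcases Sym2.mem_iff.1 hxs with rfl | rfl
      · exact hKnotC x hu e he hxe
      · exact hbonly e he hene hxe
    have hvaub : ∀ x, x ∈ s(v, a) → x ∉ s(u, b) := by
      intro x hx hx'
      rcases Sym2.mem_iff.1 hx with rfl | rfl <;> rcases Sym2.mem_iff.1 hx' with h | h
      · exact huv h.symm
      · exact hvb h
      · exact hua h.symm
      · exact hane h
    have hnew : IsAntimatching G M' := by
      constructor
      · intro e he
        rcases hmemM' e he with rfl | rfl | ⟨heM, _⟩
        · rw [SimpleGraph.mem_edgeSet, SimpleGraph.compl_adj]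
          exact ⟨hva', fun h => hva h⟩
        · rw [SimpleGraph.mem_edgeSet, SimpleGraph.compl_adj]
          exact ⟨hub', fun h => hub h⟩
        · exact hM.1.1 e heM
      · intro e he f hf hef x hxe hxf
        rcases hmemM' e he with rfl | rfl | ⟨heM, hene⟩ <;>
          rcases hmemM' f hf with rfl | rfl | ⟨hfM, hfne⟩
        · exact hef rfl
        · exact hvaub x hxe hxf
        · exact hnotinva f hfM hfne x hxf hxe
        · exact hvaub x hxf hxe
        · exact hef rfl
        · exact hnotinub f hfM hfne x hxf hxe
        · exact hnotinva e heM hene x hxe hxf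
        · exact hnotinub e heM hene x hxe hxf
        · exact hM.1.2 e heM f hfM hef x hxe hxf
    have hub_ni : s(u, b) ∉ M.erase s(a, b) := by
      intro h
      exact hKnotC u hu _ (Finset.mem_of_mem_erase h) (by simp)
    have hva_ni : s(v, a) ∉ insert s(u, b) (M.erase s(a, b)) := by
      intro h
      rcases Finset.mem_insert.1 h with h | h
      · rcases Sym2.eq_iff.1 h with ⟨h1, _⟩ | ⟨h1, _⟩
        · exact huv h1.symm
        · exact hvb h1
      · exact hKnotC v hv _ (Finset.mem_of_mem_erase h) (by simp)
    have hcard : M'.card = M.card + 1 := by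
      rw [hM'def, Finset.card_insert_of_notMem hva_ni,
        Finset.card_insert_of_notMem hub_ni, Finset.card_erase_of_mem hab]
      have : 1 ≤ M.card := Finset.card_pos.2 ⟨_, hab⟩
      omega
    have := hM.2 _ hnew
    omega
  -- non-neighbor existence
  push_neg at hnouniv
  -- the "touched pairs" function
  set T : V → Finset (Sym2 V) := fun v => M.filter fun e => ∃ x ∈ e, ¬ G.Adj v x with hTdef
  -- T determines the neighborhood on Kset
  have hTdet : ∀ v ∈ Kset, ∀ v' ∈ Kset, T v = T v' →
      (C.filter fun x => G.Adj v x) = (C.filter fun x => G.Adj v' x) := by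
    have key : ∀ v ∈ Kset, ∀ v' ∈ Kset, T v = T v' → ∀ x ∈ C, G.Adj v x → G.Adj v' x := by
      intro v hv v' hv' hT x hx hvx
      by_contra hv'x
      obtain ⟨e, he, hxe⟩ := (hmemC x).1 hx
      have heT : e ∈ T v' := Finset.mem_filter.2 ⟨he, x, hxe, hv'x⟩
      rw [← hT] at heT
      obtain ⟨y, hye, hvy⟩ := (Finset.mem_filter.1 heT).2
      have hyx : y ≠ x := fun h => hvy (h ▸ hvx)
      have hesy : e = s(y, x) := (Sym2.mem_and_mem_iff hyx).1 ⟨hye, hxe⟩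
      have := hswap y x (hesy ▸ he) v hv hvy v' hv' hv'x
      exact hv'x (this ▸ hvx)
    intro v hv v' hv' hT
    ext x
    simp only [Finset.mem_filter]
    constructor
    · rintro ⟨hx, hadj⟩
      exact ⟨hx, key v hv v' hv' hT x hx hadj⟩
    · rintro ⟨hx, hadj⟩
      exact ⟨hx, key v' hv' v hv hT.symm x hx hadj⟩
  -- the target finset of possible T-values
  set TT : Finset (Finset (Sym2 V)) :=
    (Finset.Icc 1 d).biUnion (fun i => M.powersetCard i) with hTTdef
  have hTmem : ∀ v ∈ Kset, T v ∈ TT := by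
    intro v hv
    have hsub : T v ⊆ M := Finset.filter_subset _ _
    -- nonempty
    obtain ⟨w, hwv, hwadj⟩ := hnouniv v
    have hwC : w ∈ C := by
      by_contra hwC
      have hwK : w ∈ Kset := Finset.mem_sdiff.2 ⟨Finset.mem_univ w, hwC⟩
      exact hwadj (hclique v hv w hwK (Ne.symm hwv))
    obtain ⟨e, he, hwe⟩ := (hmemC w).1 hwC
    have hne : (T v).Nonempty := ⟨e, Finset.mem_filter.2 ⟨he, w, hwe, hwadj⟩⟩
    -- card bound
    have hcard : (T v).card ≤ d := by
      have hinj : (T v).card ≤ (Finset.univ.filter fun x => x ≠ v ∧ ¬ G.Adj v x).card := by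
        apply Finset.card_le_card_of_injOn
          (fun e => if h : ∃ x ∈ e, ¬ G.Adj v x then h.choose else v)
        · intro e heT
          obtain ⟨heM, hex⟩ := Finset.mem_filter.1 heT
          simp only [dif_pos hex]
          obtain ⟨hmem, hnadj⟩ := hex.choose_spec
          refine Finset.mem_filter.2 ⟨Finset.mem_univ _, ?_, hnadj⟩
          intro h
          exact hKnotC v hv e heM (h ▸ hmem)
        · intro e heT f hfT hfe
          obtain ⟨heM, hex⟩ := Finset.mem_filter.1 heT
          obtain ⟨hfM, hfx⟩ := Finset.mem_filter.1 hfT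
          simp only [dif_pos hex, dif_pos hfx] at hfe
          by_contra hef
          exact hM.1.2 e heM f hfM hef _ hex.choose_spec.1 (hfe ▸ hfx.choose_spec.1)
      exact hinj.trans (hdeg v hv)
    refine Finset.mem_biUnion.2 ⟨(T v).card, ?_, ?_⟩
    · exact Finset.mem_Icc.2 ⟨Finset.card_pos.2 hne, hcard⟩
    · exact Finset.mem_powersetCard.2 ⟨hsub, rfl⟩
  -- the recovery function
  set g : Finset (Sym2 V) → Finset V := fun t =>
    if h : ∃ v, v ∈ Kset ∧ T v = t then C.filter fun x => G.Adj h.choose x else ∅ with hgdef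
  have himg : (Kset.image fun v => C.filter fun x => G.Adj v x) ⊆ (Kset.image T).image g := by
    intro A hA
    obtain ⟨v, hv, rfl⟩ := Finset.mem_image.1 hA
    refine Finset.mem_image.2 ⟨T v, Finset.mem_image.2 ⟨v, hv, rfl⟩, ?_⟩
    have hex : ∃ v', v' ∈ Kset ∧ T v' = T v := ⟨v, hv, rfl⟩
    rw [hgdef]
    simp only [dif_pos hex]
    exact hTdet hex.choose hex.choose_spec.1 v hv hex.choose_spec.2
  calc (Kset.image fun v => C.filter fun x => G.Adj v x).card
      ≤ ((Kset.image T).image g).card := Finset.card_le_card himg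
    _ ≤ (Kset.image T).card := Finset.card_image_le
    _ ≤ TT.card := Finset.card_le_card (by
        intro t ht
        obtain ⟨v, hv, rfl⟩ := Finset.mem_image.1 ht
        exact hTmem v hv)
    _ ≤ ∑ i ∈ Finset.Icc 1 d, (M.powersetCard i).card := Finset.card_biUnion_le
    _ = ∑ i ∈ Finset.Icc 1 d, M.card.choose i := by
        simp [Finset.card_powersetCard]
    _ ≤ M.card + ∑ i ∈ Finset.Icc 1 d, M.card.choose i := Nat.le_add_left _ _
end
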